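/- arXiv:1510.05048 — 11 statements merged into one kernel-verified Lean document; each statement's English description precedes it below -/
import Mathlib

section
/- Let ℓ ≥ 1 be an integer and m = 2ℓ + 1. For any ε ∈ GF(3)* (i.e., ε = 1 or ε = -1), the equation (x^{3^ℓ} + ε)·(x^{3^ℓ} - x) = 1 has no solution x in GF(3^m)*. -/
lemma two_pow_mod_seven (j : ℕ) : 2^j % 7 = 1 ∨ 2^j % 7 = 2 ∨ 2^j % 7 = 4 := by
  induction j with
  | zero => left; rfl
  | succ n ih =>
    rw [pow_succ, Nat.mul_mod]
    rcases ih with h | h | h <;> rw [h] <;> decide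

lemma aux_even (j : ℕ) : (2 * 3 ^ (j + j) + 1) % 7 ≠ 0 := by
  have h1 : (3:ℕ) ^ (j + j) % 7 = 2 ^ j % 7 := by
    rw [pow_add, ← mul_pow]
    conv_lhs => rw [Nat.pow_mod]
    norm_num
  have := two_pow_mod_seven j
  omega

lemma aux_odd (j : ℕ) : (2 * 3 ^ (2 * j + 1) - 1) % 7 ≠ 0 := by
  have h1 : (3:ℕ) ^ (2 * j + 1) % 7 = (3 * (2 ^ j % 7)) % 7 := by
    have : (3:ℕ) ^ (2 * j + 1) = 3 * 9 ^ j := by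
      rw [pow_succ, pow_mul]; norm_num; ring
    rw [this, Nat.mul_mod, Nat.pow_mod]
  have := two_pow_mod_seven j
  have h2 : 1 ≤ (3:ℕ) ^ (2 * j + 1) := Nat.one_le_pow _ _ (by norm_num)
  omega

open Polynomial in
lemma core_no_sol (ℓ : ℕ) (B : GaloisField 3 (2 * ℓ + 1))
    (hB : B ^ 3 ^ ℓ * (B ^ 3 ^ ℓ - B) = 1) : False := by
  have hqdef : (3:ℕ) ^ ℓ = 3 ^ ℓ := rfl
  haveI : Fintype (GaloisField 3 (2 * ℓ + 1)) := Fintype.ofFinite _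
  have hcard : Fintype.card (GaloisField 3 (2 * ℓ + 1)) = 3 ^ (2 * ℓ + 1) := by
    rw [← Nat.card_eq_fintype_card]
    exact GaloisField.card 3 (2 * ℓ + 1) (by omega)
  have hns : ¬ IsSquare (-1 : GaloisField 3 (2 * ℓ + 1)) := by
    rw [FiniteField.isSquare_neg_one_iff, hcard]
    have h9 : ∀ j : ℕ, (9:ℕ) ^ j % 4 = 1 := by
      intro j
      induction j with
      | zero => rfl
      | succ n ih => rw [pow_succ, Nat.mul_mod, ih]
    have h3m : (3:ℕ) ^ (2 * ℓ + 1) = 9 ^ ℓ * 3 := by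
      rw [pow_succ, pow_mul]; norm_num
    have := h9 ℓ
    simp only [ne_eq, not_not]
    omega
  -- the extension field L = K[i]
  have hirr : Irreducible (X ^ 2 - C (-1 : GaloisField 3 (2 * ℓ + 1))) := by
    apply X_pow_sub_C_irreducible_of_prime Nat.prime_two
    intro b hb
    exact hns ⟨b, by rw [← hb]; ring⟩
  haveI : Fact (Irreducible (X ^ 2 - C (-1 : GaloisField 3 (2 * ℓ + 1)))) := ⟨hirr⟩
  set L := AdjoinRoot (X ^ 2 - C (-1 : GaloisField 3 (2 * ℓ + 1))) with hLdef
  obtain ⟨i, hi2⟩ : ∃ i : L, i ^ 2 = -1 :=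
    ⟨AdjoinRoot.root _, by rw [root_X_pow_sub_C_pow, map_neg, map_one]⟩
  haveI : CharP L 3 :=
    charP_of_injective_algebraMap (algebraMap (GaloisField 3 (2 * ℓ + 1)) L).injective 3
  have h3L : (3 : L) = 0 := by
    have := CharP.cast_eq_zero L 3
    exact_mod_cast this
  -- no element of K maps to a square root of -1
  have himg : ∀ y : GaloisField 3 (2 * ℓ + 1), ∀ z : L, z ^ 2 = -1 →
      algebraMap _ L y ≠ z := by
    intro y z hz h
    apply hns
    refine ⟨y, ?_⟩
    have hm1 : algebraMap (GaloisField 3 (2 * ℓ + 1)) L (-1) = -1 := by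
      rw [map_neg, map_one]
    have : algebraMap (GaloisField 3 (2 * ℓ + 1)) L (y * y)
        = algebraMap (GaloisField 3 (2 * ℓ + 1)) L (-1) := by
      rw [map_mul, h, hm1]
      linear_combination hz
    exact ((algebraMap (GaloisField 3 (2 * ℓ + 1)) L).injective this).symm
  have hni2 : (-i) ^ 2 = -1 := by rw [neg_sq, hi2]
  -- basic elements
  set b : L := algebraMap _ L B with hbdef
  set c : L := b ^ 3 ^ ℓ with hcdef
  have hcimg : c = algebraMap _ L (B ^ 3 ^ ℓ) := by rw [map_pow]
  have hub : b - i ≠ 0 := by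
    rw [sub_ne_zero]; exact himg B i hi2
  have hvb : b + i ≠ 0 := by
    intro h
    exact himg B (-i) hni2 (by linear_combination h)
  have huc : c - i ≠ 0 := by
    rw [sub_ne_zero, hcimg]; exact himg _ i hi2
  have hvc : c + i ≠ 0 := by
    intro h
    exact himg (B ^ 3 ^ ℓ) (-i) hni2 (by rw [← hcimg]; linear_combination h)
  -- the equation in L
  have hc : c * (c - b) = 1 := by
    have := congrArg (algebraMap (GaloisField 3 (2 * ℓ + 1)) L) hB
    rw [map_mul, map_sub, map_pow, map_one] at this
    exact this
  -- key identity
  have hkey : (b - i) * (c - i) ^ 2 = (b + i) * (c + i) ^ 2 := by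
    linear_combination (-2*i) * hc + (-2*i*b*c) * h3L + (-2*i) * hi2
  -- powers of i under Frobenius
  have hiq : ∀ k : ℕ, i ^ 3 ^ k = (-1) ^ k * i := by
    intro k
    induction k with
    | zero => simp
    | succ n ih =>
      have h3 : (3:ℕ) ^ (n + 1) = 3 ^ n * 3 := pow_succ 3 n
      rw [h3, pow_mul, ih]
      rcases Nat.even_or_odd n with h | h
      · rw [h.neg_one_pow, (h.add_one).neg_one_pow]
        linear_combination i * hi2
      · rw [h.neg_one_pow, (h.add_one).neg_one_pow]
        linear_combination -i * hi2
  -- Frobenius on b ± i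
  have hfrobsub : (b - i) ^ 3 ^ ℓ = c - (-1) ^ ℓ * i := by
    rw [sub_pow_char_pow, hiq, hcdef]
  have hfrobadd : (b + i) ^ 3 ^ ℓ = c + (-1) ^ ℓ * i := by
    rw [add_pow_char_pow, hiq, hcdef]
  -- s and its relations
  set s : L := (b - i) / (b + i) with hsdef
  have hs0 : s ≠ 0 := div_ne_zero hub hvb
  -- τ relation: s ^ (3 ^ (2ℓ+1) + 1) = 1
  have hBcard : B ^ 3 ^ (2 * ℓ + 1) = B := by
    rw [← hcard]; exact FiniteField.pow_card B
  have hb3m : b ^ 3 ^ (2 * ℓ + 1) = b := by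
    rw [hbdef, ← map_pow, hBcard]
  have him : i ^ 3 ^ (2 * ℓ + 1) = -i := by
    rw [hiq]
    have : Odd (2 * ℓ + 1) := ⟨ℓ, by ring⟩
    rw [this.neg_one_pow]; ring
  have hstau : s ^ (3 ^ (2 * ℓ + 1) + 1) = 1 := by
    rw [pow_succ, hsdef, div_pow, sub_pow_char_pow, add_pow_char_pow, hb3m, him]
    rw [sub_neg_eq_add, div_mul_div_comm, div_eq_one_iff_eq
      (mul_ne_zero (by rw [← sub_eq_add_neg]; exact hub) hvb)]
    ring
  -- Frobenius relation, by parity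
  have hmain : ∃ A : ℕ, s ^ A = 1 ∧ A % 7 ≠ 0 ∧ A ∣ (2 * 3 ^ ℓ - 1) * (2 * 3 ^ ℓ + 1) := by
    have hsq : s ^ 3 ^ ℓ = ((b - i) ^ 3 ^ ℓ) / ((b + i) ^ 3 ^ ℓ) := div_pow _ _ _
    rcases Nat.even_or_odd ℓ with h | h
    · -- even case: s ^ (2q+1) = 1
      refine ⟨2 * 3 ^ ℓ + 1, ?_, ?_, dvd_mul_left _ _⟩
      · have hsq' : s ^ 3 ^ ℓ = (c - i) / (c + i) := by
          rw [hsq, hfrobsub, hfrobadd, h.neg_one_pow, one_mul]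
        have : s ^ (2 * 3 ^ ℓ + 1) = (s ^ 3 ^ ℓ) ^ 2 * s := by
          rw [← pow_mul, ← pow_succ]
          congr 1
          ring
        rw [this, hsq', hsdef, div_pow, div_mul_div_comm,
          div_eq_one_iff_eq (mul_ne_zero (pow_ne_zero 2 hvc) hvb)]
        linear_combination hkey
      · obtain ⟨j, rfl⟩ := h
        exact aux_even j
    · -- odd case: s ^ (2q-1) = 1
      refine ⟨2 * 3 ^ ℓ - 1, ?_, ?_, dvd_mul_right _ _⟩
      · have hsq' : s ^ 3 ^ ℓ = (c + i) / (c - i) := by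
          rw [hsq, hfrobsub, hfrobadd, h.neg_one_pow]
          rw [neg_one_mul, sub_neg_eq_add, ← sub_eq_add_neg]
        have h2q : s ^ (2 * 3 ^ ℓ) = s := by
          have : s ^ (2 * 3 ^ ℓ) = (s ^ 3 ^ ℓ) ^ 2 := by
            rw [← pow_mul]; congr 1; ring
          rw [this, hsq', div_pow, hsdef, div_eq_div_iff (pow_ne_zero 2 huc) hvb]
          linear_combination -hkey
        have hpos : 1 ≤ 2 * 3 ^ ℓ := by
          have := Nat.one_le_pow ℓ 3 (by norm_num); omega
        have : s ^ (2 * 3 ^ ℓ - 1) * s = 1 * s := by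
          rw [← pow_succ, one_mul]
          rw [(by omega : 2 * 3 ^ ℓ - 1 + 1 = 2 * 3 ^ ℓ), h2q]
        exact mul_right_cancel₀ hs0 this
      · obtain ⟨j, rfl⟩ := h
        exact aux_odd j
  obtain ⟨A, hsA, hA7, hAdvd⟩ := hmain
  -- order argument
  have hd1 : orderOf s ∣ A := orderOf_dvd_of_pow_eq_one hsA
  have hd2 : orderOf s ∣ 3 ^ (2 * ℓ + 1) + 1 := orderOf_dvd_of_pow_eq_one hstau
  have h3m' : (3:ℕ) ^ (2 * ℓ + 1) = 3 * (3 ^ ℓ) ^ 2 := by ring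
  have hd7 : orderOf s ∣ 7 := by
    have h1 : orderOf s ∣ 4 * (3 * (3 ^ ℓ) ^ 2 + 1) := by
      exact Dvd.dvd.mul_left (h3m' ▸ hd2) 4
    have h2 : orderOf s ∣ 3 * ((2 * 3 ^ ℓ - 1) * (2 * 3 ^ ℓ + 1)) :=
      (hd1.trans hAdvd).mul_left 3
    have heq7 : 4 * (3 * (3 ^ ℓ) ^ 2 + 1) - 3 * ((2 * 3 ^ ℓ - 1) * (2 * 3 ^ ℓ + 1)) = 7 := by
      obtain ⟨t, ht⟩ : ∃ t, (3:ℕ) ^ ℓ = t + 1 :=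
        ⟨3 ^ ℓ - 1, by have := Nat.one_le_pow ℓ 3 (by norm_num); omega⟩
      rw [ht, (by omega : 2 * (t + 1) - 1 = 2 * t + 1)]
      ring_nf
      omega
    have := Nat.dvd_sub h1 h2
    rwa [heq7] at this
  have hd : orderOf s = 1 := by
    rcases (by norm_num : Nat.Prime 7).eq_one_or_self_of_dvd _ hd7 with h | h
    · exact h
    · exfalso
      apply hA7
      have h7A : (7:ℕ) ∣ A := h ▸ hd1
      omega
  have hs1 : s = 1 := orderOf_eq_one_iff.mp hd
  -- conclude
  have huv : b - i = b + i := by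
    have := hs1
    rw [hsdef, div_eq_one_iff_eq hvb] at this
    exact this
  have hizero : i = 0 := by linear_combination i * h3L + huv
  rw [hizero] at hi2
  exact one_ne_zero (α := L) (by linear_combination hi2)

/-- Let ℓ ≥ 1 and m = 2ℓ + 1. For any ε ∈ GF(3)* (i.e. ε = 1 or ε = -1),
the equation (x^{3^ℓ} + ε)(x^{3^ℓ} - x) = 1 has no solution x ∈ GF(3^m)*. -/
theorem stmt_0 (ℓ : ℕ) (hℓ : 1 ≤ ℓ)
    (ε : GaloisField 3 (2 * ℓ + 1)) (hε : ε = 1 ∨ ε = -1)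
    (x : GaloisField 3 (2 * ℓ + 1)) (hx : x ≠ 0) :
    (x ^ 3 ^ ℓ + ε) * (x ^ 3 ^ ℓ - x) ≠ 1 := by
  intro heq
  have hε3 : ε ^ 3 ^ ℓ = ε := by
    rcases hε with h | h <;> subst h
    · exact one_pow _
    · exact Odd.neg_one_pow (Odd.pow (by decide))
  apply core_no_sol ℓ (x + ε)
  have hBq : (x + ε) ^ 3 ^ ℓ = x ^ 3 ^ ℓ + ε := by
    rw [add_pow_char_pow, hε3]
  rw [hBq]
  calc (x ^ 3 ^ ℓ + ε) * (x ^ 3 ^ ℓ + ε - (x + ε))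
      = (x ^ 3 ^ ℓ + ε) * (x ^ 3 ^ ℓ - x) := by ring
  _ = 1 := heq
end

section
/- Let ℓ ≥ 1 be an integer and m = 2ℓ + 1. There is no element θ ∈ GF(3^m)* satisfying θ^{3^ℓ}·(θ^{3^ℓ} - θ) = 1. -/
/-- Let ℓ ≥ 1 and m = 2ℓ + 1. No θ ∈ GF(3^m)* satisfies θ^{3^ℓ}·(θ^{3^ℓ} - θ) = 1. -/
theorem stmt_1 (ℓ : ℕ) (hℓ : 1 ≤ ℓ)
    (θ : GaloisField 3 (2 * ℓ + 1)) (hθ : θ ≠ 0) :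
    θ ^ 3 ^ ℓ * (θ ^ 3 ^ ℓ - θ) ≠ 1 := by
  intro h
  haveI : Fact (Nat.Prime 3) := ⟨by norm_num⟩
  haveI : Fintype (GaloisField 3 (2 * ℓ + 1)) := Fintype.ofFinite _
  have h3 : (3 : GaloisField 3 (2 * ℓ + 1)) = 0 :=
    CharP.cast_eq_zero (GaloisField 3 (2 * ℓ + 1)) 3
  have hc : Fintype.card (GaloisField 3 (2 * ℓ + 1)) = 3 ^ (2 * ℓ + 1) := by
    rw [← Nat.card_eq_fintype_card, GaloisField.card]; omega
  have hθm : θ ^ 3 ^ (2 * ℓ + 1) = θ := by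
    have := FiniteField.pow_card θ
    rwa [hc] at this
  set t : GaloisField 3 (2 * ℓ + 1) := θ ^ 3 ^ ℓ with ht
  set u : GaloisField 3 (2 * ℓ + 1) := θ ^ 3 ^ (2 * ℓ) with hu_def
  have htq : t ^ 3 ^ ℓ = u := by
    rw [ht, ← pow_mul, ← pow_add, show ℓ + ℓ = 2 * ℓ from by omega]
  have hu3 : u ^ 3 = θ := by
    rw [hu_def, ← pow_mul, ← pow_succ, hθm]
  have e0 : t ^ 2 - t * θ = 1 := by linear_combination h
  have e1 : u ^ 2 - u * t = 1 := by
    have := congrArg (· ^ 3 ^ ℓ) e0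
    simp only [one_pow] at this
    rw [sub_pow_char_pow, mul_pow, ← pow_mul, mul_comm 2 (3 ^ ℓ), pow_mul, htq] at this
    linear_combination this
  have e0' : t ^ 2 - t * u ^ 3 = 1 := by rw [hu3]; exact e0
  have e1' : t * u = u ^ 2 - 1 := by linear_combination -e1
  have hu64 : u ^ 6 + u ^ 4 = 1 := by
    linear_combination (-(u ^ 2)) * e0' + (t * u + u ^ 2 - 1 - u ^ 4) * e1' +
      (u ^ 4 - u ^ 2) * h3
  have hu26 : u ^ 26 = 1 := by
    linear_combination ((1:GaloisField 3 (2*ℓ+1)) + u ^ 4 + u ^ 6 + u ^ 8 + 2 * u ^ 10 +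
      2 * u ^ 12 + u ^ 16 + 2 * u ^ 18 + u ^ 20) * hu64 +
      (-1 * u ^ 14 - 1 * u ^ 16 - 1 * u ^ 22 - 1 * u ^ 24) * h3
  have hθ26 : θ ^ 26 = 1 := by
    rw [← hu3, ← pow_mul]
    linear_combination (u ^ 52 + u ^ 26 + 1) * hu26
  have hθ27 : θ ^ 27 = θ := by
    rw [← hu3, ← pow_mul]
    linear_combination (u ^ 3 * (u ^ 52 + u ^ 26 + 1)) * hu26
  have hred : ∀ j k : ℕ, θ ^ 3 ^ (k + 3 * j) = θ ^ 3 ^ k := by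
    intro j
    induction j with
    | zero => intro k; rfl
    | succ n ih =>
      intro k
      rw [show k + 3 * (n + 1) = (k + 3) + 3 * n from by ring, ih (k + 3),
        show (3:ℕ) ^ (k + 3) = 27 * 3 ^ k from by rw [pow_add]; ring, pow_mul, hθ27]
  have hexp : (3:ℕ) ^ ℓ = 3 ^ (ℓ % 3 + 3 * (ℓ / 3)) := by congr 1; omega
  have htred : t = θ ^ 3 ^ (ℓ % 3) := by rw [ht, hexp]; exact hred _ _
  have hlt : ℓ % 3 < 3 := Nat.mod_lt _ (by norm_num)
  have h10 : (1 : GaloisField 3 (2 * ℓ + 1)) ≠ 0 := one_ne_zero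
  interval_cases hr : ℓ % 3
  · rw [pow_zero, pow_one] at htred
    rw [htred] at e0
    exact h10 (by linear_combination -e0)
  · rw [pow_one] at htred
    rw [htred] at e0
    have e : θ ^ 6 - θ ^ 4 = 1 := by linear_combination e0
    apply h10
    linear_combination ((2:GaloisField 3 (2*ℓ+1)) + θ ^ 2 + θ ^ 4 + θ ^ 6 + θ ^ 12 +
      2 * θ ^ 16 + θ ^ 18 + θ ^ 20 + θ ^ 22) * e + (2 * θ ^ 2) * hθ26 +
      ((1:GaloisField 3 (2*ℓ+1)) + θ ^ 2 + θ ^ 4 + θ ^ 16 + θ ^ 20 - 1 * θ ^ 28) * h3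
  · rw [show (3:ℕ) ^ 2 = 9 from rfl] at htred
    rw [htred] at e0
    have e : θ ^ 18 - θ ^ 10 = 1 := by linear_combination e0
    apply h10
    linear_combination ((2:GaloisField 3 (2*ℓ+1)) + θ ^ 2 + 2 * θ ^ 4 + θ ^ 6 + 2 * θ ^ 8 +
      θ ^ 10 + 2 * θ ^ 12 + θ ^ 14 + 2 * θ ^ 16) * e +
      (2 * θ ^ 2 + θ ^ 4 + 2 * θ ^ 6 + θ ^ 8) * hθ26 +
      ((1:GaloisField 3 (2*ℓ+1)) + θ ^ 2 + θ ^ 4 + θ ^ 6 + θ ^ 8 + θ ^ 10 + θ ^ 12 +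
      θ ^ 14 + θ ^ 16 - 1 * θ ^ 28 - 1 * θ ^ 30 - 1 * θ ^ 32 - 1 * θ ^ 34) * h3
end

section
/- Let ℓ ≥ 1 be an integer and m = 2ℓ + 1. If θ ∈ GF(3^m)* satisfies θ^{3^ℓ} - θ^{-3^ℓ} = θ, then θ² - 1 is a nonzero square in GF(3^m), i.e., there exists s ∈ GF(3^m)* with s² = θ² - 1. -/
/-- Let ℓ ≥ 1 and m = 2ℓ + 1. If θ ∈ GF(3^m)* satisfies θ^{3^ℓ} - θ^{-3^ℓ} = θ,
then θ² - 1 is a nonzero square in GF(3^m). -/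
theorem stmt_2 (ℓ : ℕ) (hℓ : 1 ≤ ℓ)
    (θ : GaloisField 3 (2 * ℓ + 1)) (hθ : θ ≠ 0)
    (h : θ ^ 3 ^ ℓ - (θ ^ 3 ^ ℓ)⁻¹ = θ) :
    ∃ s : GaloisField 3 (2 * ℓ + 1), s ≠ 0 ∧ s ^ 2 = θ ^ 2 - 1 := by
  haveI : Fact (Nat.Prime 3) := ⟨by norm_num⟩
  have hm : 2 * ℓ + 1 ≠ 0 := by omega
  haveI : Fintype (GaloisField 3 (2 * ℓ + 1)) := Fintype.ofFinite _
  have hcard : Fintype.card (GaloisField 3 (2 * ℓ + 1)) = 3 ^ (2 * ℓ + 1) := by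
    rw [← Nat.card_eq_fintype_card]; exact GaloisField.card 3 _ hm
  have hodd3 : Odd (3 ^ ℓ) := Odd.pow ⟨1, by norm_num⟩
  have hu : θ ^ 3 ^ ℓ ≠ 0 := pow_ne_zero _ hθ
  have hchar : ringChar (GaloisField 3 (2 * ℓ + 1)) = 3 := ringChar.eq _ 3
  have hne : (-1 : GaloisField 3 (2 * ℓ + 1)) ≠ 1 := by
    intro hh
    have h2 : (2 : GaloisField 3 (2 * ℓ + 1)) = 0 := by linear_combination -hh
    have : (3 : ℕ) ∣ 2 :=
      (CharP.cast_eq_zero_iff (GaloisField 3 (2 * ℓ + 1)) 3 2).mp (by exact_mod_cast h2)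
    omega
  -- θ² - 1 ≠ 0
  have hc : θ ^ 2 - 1 ≠ 0 := by
    intro h2
    have hθ2 : θ ^ 2 = 1 := by linear_combination h2
    obtain ⟨k, hk⟩ := hodd3
    have hfix : θ ^ 3 ^ ℓ = θ := by
      rw [hk, pow_succ, pow_mul, hθ2, one_pow, one_mul]
    rw [hfix] at h
    have : θ⁻¹ = 0 := by linear_combination -h
    exact hθ (inv_eq_zero.mp this)
  -- key relation
  have hinv : θ ^ 3 ^ ℓ * (θ ^ 3 ^ ℓ)⁻¹ = 1 := mul_inv_cancel₀ hu
  have h2 : (θ ^ 3 ^ ℓ) ^ 2 - 1 = θ ^ 3 ^ ℓ * θ := by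
    linear_combination θ ^ 3 ^ ℓ * h + hinv
  have key : (θ ^ 2 - 1) ^ 3 ^ ℓ = θ ^ 3 ^ ℓ * θ := by
    have hfr : (θ ^ 2 - 1) ^ 3 ^ ℓ = (θ ^ 2) ^ 3 ^ ℓ - 1 := by
      have := map_sub (iterateFrobenius (GaloisField 3 (2 * ℓ + 1)) 3 ℓ) (θ ^ 2) 1
      simpa [iterateFrobenius_def] using this
    rw [hfr, ← pow_mul, mul_comm 2 (3 ^ ℓ), pow_mul, h2]
  set e := Fintype.card (GaloisField 3 (2 * ℓ + 1)) / 2 with he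
  have hoddcard : Fintype.card (GaloisField 3 (2 * ℓ + 1)) % 2 = 1 := by
    rw [hcard]; exact Nat.odd_iff.mp (Odd.pow ⟨1, by norm_num⟩)
  have he2 : 2 * e = Fintype.card (GaloisField 3 (2 * ℓ + 1)) - 1 := by omega
  have hB2 : (θ ^ e) * (θ ^ e) = 1 := by
    rw [← pow_add, ← two_mul, he2]
    exact FiniteField.pow_card_sub_one_eq_one θ hθ
  have hA2 : ((θ ^ 2 - 1) ^ e) * ((θ ^ 2 - 1) ^ e) = 1 := by
    rw [← pow_add, ← two_mul, he2]
    exact FiniteField.pow_card_sub_one_eq_one _ hc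
  have hstep : ((θ ^ 2 - 1) ^ e) ^ 3 ^ ℓ = (θ ^ e) ^ 3 ^ ℓ * θ ^ e := by
    rw [← pow_mul, mul_comm e (3 ^ ℓ), pow_mul, key, mul_pow, ← pow_mul,
      mul_comm (3 ^ ℓ) e, pow_mul]
  have hAcases := mul_self_eq_one_iff.mp hA2
  have hBcases := mul_self_eq_one_iff.mp hB2
  have hA1 : (θ ^ 2 - 1) ^ e = 1 := by
    rcases hAcases with hA | hA
    · exact hA
    · exfalso
      rcases hBcases with hB | hB
      · rw [hA, hB, one_pow, one_mul, Odd.neg_one_pow hodd3] at hstep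
        exact hne hstep
      · rw [hA, hB, Odd.neg_one_pow hodd3, neg_mul_neg, one_mul] at hstep
        exact hne hstep
  have hsq : IsSquare (θ ^ 2 - 1) := by
    rw [FiniteField.isSquare_iff (by rw [hchar]; norm_num) hc]
    exact hA1
  obtain ⟨r, hr⟩ := hsq
  refine ⟨r, ?_, by rw [sq, ← hr]⟩
  intro hr0
  rw [hr0, mul_zero] at hr
  exact hc hr
end

section
/- Let ℓ ≥ 1 be an integer, m = 2ℓ + 1, and v = 2·3^ℓ + 1. If y ∈ GF(3^m) satisfies (1 + y)^v = 1 + y^v, then y³ = y (equivalently, y lies in the prime subfield GF(3)). -/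
/-- Let ℓ ≥ 1, m = 2ℓ + 1 and v = 2·3^ℓ + 1. If y ∈ GF(3^m) satisfies
(1 + y)^v = 1 + y^v, then y³ = y (i.e. y ∈ GF(3)). -/
theorem stmt_6 (ℓ : ℕ) (hℓ : 1 ≤ ℓ)
    (y : GaloisField 3 (2 * ℓ + 1))
    (h : (1 + y) ^ (2 * 3 ^ ℓ + 1) = 1 + y ^ (2 * 3 ^ ℓ + 1)) :
    y ^ 3 = y := by
  have h3 : (3 : GaloisField 3 (2 * ℓ + 1)) = 0 := by
    exact_mod_cast CharP.cast_eq_zero (GaloisField 3 (2 * ℓ + 1)) 3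
  have hf : (1 + y) ^ (3 ^ ℓ) = 1 + y ^ (3 ^ ℓ) := by
    rw [add_pow_char_pow]; simp
  have : Fintype (GaloisField 3 (2 * ℓ + 1)) := Fintype.ofFinite _
  have hcard : y ^ (3 ^ (2 * ℓ + 1)) = y := by
    have h1 := FiniteField.pow_card y
    rw [← Nat.card_eq_fintype_card, GaloisField.card 3 (2 * ℓ + 1) (by omega)] at h1
    exact h1
  have h' : (1 + y ^ (3 ^ ℓ)) ^ 2 * (1 + y) = 1 + (y ^ (3 ^ ℓ)) ^ 2 * y := by
    rw [← hf, ← pow_mul, ← pow_succ, ← pow_mul, ← pow_succ]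
    have e : 3 ^ ℓ * 2 + 1 = 2 * 3 ^ ℓ + 1 := by ring
    rw [e]; exact h
  have key : (y - y ^ (3 ^ ℓ)) * (1 - y ^ (3 ^ ℓ)) = 0 := by
    linear_combination h' - (y ^ (3 ^ ℓ) + y ^ (3 ^ ℓ) * y) * h3
  rcases mul_eq_zero.mp key with hk | hk
  · have hya : y ^ (3 ^ ℓ) = y := (sub_eq_zero.mp hk).symm
    have h2 : y ^ (3 ^ (2 * ℓ)) = y := by
      have : 3 ^ (2 * ℓ) = 3 ^ ℓ * 3 ^ ℓ := by rw [two_mul, pow_add]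
      rw [this, pow_mul, hya, hya]
    calc y ^ 3 = (y ^ (3 ^ (2 * ℓ))) ^ 3 := by rw [h2]
    _ = y ^ (3 ^ (2 * ℓ + 1)) := by rw [← pow_mul, ← pow_succ]
    _ = y := hcard
  · have hya : y ^ (3 ^ ℓ) = 1 := by
      have := sub_eq_zero.mp hk; exact this.symm
    have hy1 : y = 1 := by
      calc y = y ^ (3 ^ (2 * ℓ + 1)) := hcard.symm
      _ = (y ^ (3 ^ ℓ)) ^ (3 ^ (ℓ + 1)) := by rw [← pow_mul, ← pow_add]; ring_nf
      _ = 1 := by rw [hya, one_pow]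
    rw [hy1, one_pow]
end

section
/- Let ℓ ≥ 1 be an integer and m = 2ℓ + 1. Then gcd(2·3^ℓ + 1, 3^m - 1) = 1. -/
lemma stmt_7_key (x : ℕ) (hx : 1 ≤ x) :
    4 * (3 * x * x - 1) + 1 = (2 * x + 1) * (3 * (2 * x - 1)) := by
  have h1 : 1 ≤ 3 * x * x := by nlinarith
  have h2 : 1 ≤ 2 * x := by omega
  zify [h1, h2]
  ring

/-- Let ℓ ≥ 1 and m = 2ℓ + 1. Then gcd(2·3^ℓ + 1, 3^m - 1) = 1. -/
theorem stmt_7 (ℓ : ℕ) (hℓ : 1 ≤ ℓ) :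
    Nat.gcd (2 * 3 ^ ℓ + 1) (3 ^ (2 * ℓ + 1) - 1) = 1 := by
  have hx1 : 1 ≤ 3 ^ ℓ := Nat.one_le_pow _ _ (by norm_num)
  have hpow : 3 ^ (2 * ℓ + 1) = 3 * 3 ^ ℓ * 3 ^ ℓ := by
    rw [two_mul, pow_add, pow_add, pow_one]; ring
  have hdvd : (2 * 3 ^ ℓ + 1) ∣ 4 * (3 ^ (2 * ℓ + 1) - 1) + 1 :=
    ⟨3 * (2 * 3 ^ ℓ - 1), by rw [hpow]; exact stmt_7_key _ hx1⟩
  set d := Nat.gcd (2 * 3 ^ ℓ + 1) (3 ^ (2 * ℓ + 1) - 1) with hd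
  have h4 : d ∣ 4 * (3 ^ (2 * ℓ + 1) - 1) := Dvd.dvd.mul_left (Nat.gcd_dvd_right _ _) 4
  have h5 : d ∣ 4 * (3 ^ (2 * ℓ + 1) - 1) + 1 := dvd_trans (Nat.gcd_dvd_left _ _) hdvd
  have h6 : d ∣ 1 := by
    have := Nat.dvd_sub h5 h4
    simpa using this
  exact Nat.dvd_one.mp h6
end

section
/- Let ℓ ≥ 1 be an integer, m = 2ℓ + 1, u = (3^m + 1)/2, and v = 2·3^ℓ + 1. The 3-cyclotomic cosets C_u = {u·3^s mod (3^m - 1) : 0 ≤ s ≤ m - 1} and C_v = {v·3^s mod (3^m - 1) : 0 ≤ s ≤ m - 1} each have exactly m elements, and C_u ∩ C_v = ∅. -/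
/-- Base-3 "two digits" uniqueness: if a number is `2·3^a + 3^s` with `a ≠ s`,
then `a` and `s` are determined. -/
lemma key3 : ∀ n a s b t : ℕ, a + s ≤ n → a ≠ s → b ≠ t →
    2 * 3 ^ a + 3 ^ s = 2 * 3 ^ b + 3 ^ t → a = b ∧ s = t := by
  intro n
  induction n with
  | zero => intro a s b t h has _ _; omega
  | succ n ih =>
    intro a s b t hn has hbt heq
    have pinj : Function.Injective fun k : ℕ => 3 ^ k :=
      Nat.pow_right_injective (by norm_num)
    have h3 : ∀ x : ℕ, 1 ≤ x → 3 ^ x % 3 = 0 := by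
      intro x hx
      have : (3 : ℕ) ∣ 3 ^ x := dvd_pow_self 3 (by omega)
      omega
    rcases Nat.eq_zero_or_pos a with ha | ha
    · subst ha
      have hs : 1 ≤ s := by omega
      have hb : b = 0 := by
        by_contra hb
        rcases Nat.eq_zero_or_pos t with ht | ht
        · subst ht
          have := h3 s hs; have := h3 b (by omega)
          simp only [pow_zero] at heq; omega
        · have := h3 s hs; have := h3 b (by omega); have := h3 t ht
          simp only [pow_zero] at heq; omega
      subst hb
      have hst : (3 : ℕ) ^ s = 3 ^ t := by simp only [pow_zero] at heq; omega
      exact ⟨rfl, pinj hst⟩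
    · rcases Nat.eq_zero_or_pos s with hs | hs
      · subst hs
        have ht : t = 0 := by
          by_contra ht
          rcases Nat.eq_zero_or_pos b with hb | hb
          · subst hb
            have := h3 a ha; have := h3 t (by omega)
            simp only [pow_zero] at heq; omega
          · have := h3 a ha; have := h3 b hb; have := h3 t (by omega)
            simp only [pow_zero] at heq; omega
        subst ht
        have hab : (3 : ℕ) ^ a = 3 ^ b := by simp only [pow_zero] at heq; omega
        exact ⟨pinj hab, rfl⟩
      · have hb : 1 ≤ b := by
          by_contra hb
          have hb0 : b = 0 := by omega
          subst hb0
          have := h3 a ha; have := h3 s hs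
          rcases Nat.eq_zero_or_pos t with ht | ht
          · subst ht; simp only [pow_zero] at heq; omega
          · have := h3 t ht; simp only [pow_zero] at heq; omega
        have ht : 1 ≤ t := by
          by_contra ht
          have ht0 : t = 0 := by omega
          subst ht0
          have := h3 a ha; have := h3 s hs; have := h3 b hb
          simp only [pow_zero] at heq; omega
        have ea : (3 : ℕ) ^ a = 3 * 3 ^ (a - 1) := by
          rw [← pow_succ']; congr 1; omega
        have es : (3 : ℕ) ^ s = 3 * 3 ^ (s - 1) := by
          rw [← pow_succ']; congr 1; omega
        have eb : (3 : ℕ) ^ b = 3 * 3 ^ (b - 1) := by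
          rw [← pow_succ']; congr 1; omega
        have et : (3 : ℕ) ^ t = 3 * 3 ^ (t - 1) := by
          rw [← pow_succ']; congr 1; omega
        have heq' : 2 * 3 ^ (a - 1) + 3 ^ (s - 1) = 2 * 3 ^ (b - 1) + 3 ^ (t - 1) := by
          rw [ea, es, eb, et] at heq; omega
        obtain ⟨h1, h2⟩ := ih (a - 1) (s - 1) (b - 1) (t - 1) (by omega) (by omega)
          (by omega) heq'
        omega

/-- Let ℓ ≥ 1, m = 2ℓ + 1, u = (3^m + 1)/2, v = 2·3^ℓ + 1. The 3-cyclotomic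
cosets C_u and C_v modulo 3^m - 1 each have m elements and are disjoint. -/
theorem stmt_9 (ℓ : ℕ) (hℓ : 1 ≤ ℓ) (m u v : ℕ)
    (hm : m = 2 * ℓ + 1) (hu : u = (3 ^ m + 1) / 2) (hv : v = 2 * 3 ^ ℓ + 1)
    (Cu Cv : Finset ℕ)
    (hCu : Cu = (Finset.range m).image (fun s => u * 3 ^ s % (3 ^ m - 1)))
    (hCv : Cv = (Finset.range m).image (fun s => v * 3 ^ s % (3 ^ m - 1))) :
    Cu.card = m ∧ Cv.card = m ∧ Cu ∩ Cv = ∅ := by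
  subst hm hu hv hCu hCv
  have hodd : ∀ x : ℕ, 3 ^ x % 2 = 1 := by
    intro x; rw [Nat.pow_mod]; norm_num
  have hd9 : (9 : ℕ) ^ (ℓ - 1) % 4 = 1 := by
    rw [Nat.pow_mod]; norm_num
  obtain ⟨e, he⟩ : ∃ e, (9 : ℕ) ^ (ℓ - 1) = 4 * e + 1 := ⟨9 ^ (ℓ - 1) / 4, by omega⟩
  have hd : (3 : ℕ) ^ (2 * ℓ - 1) = 12 * e + 3 := by
    have h1 : 2 * ℓ - 1 = 2 * (ℓ - 1) + 1 := by omega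
    rw [h1, pow_succ, pow_mul]
    norm_num [he]; ring
  have hd1 : (3 : ℕ) ^ (2 * ℓ) = 36 * e + 9 := by
    have h1 : 2 * ℓ = (2 * ℓ - 1) + 1 := by omega
    rw [h1, pow_succ, hd]; ring
  have hd2 : (3 : ℕ) ^ (2 * ℓ + 1) = 108 * e + 27 := by
    rw [pow_succ, hd1]; ring
  -- Step A: explicit residues of the C_u coset
  have stepA : ∀ s, s ≤ 2 * ℓ →
      (3 ^ (2 * ℓ + 1) + 1) / 2 * 3 ^ s % (3 ^ (2 * ℓ + 1) - 1)
        = (54 * e + 13) + 3 ^ s := by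
    intro s hs
    obtain ⟨k, hk⟩ : ∃ k, (3 : ℕ) ^ s = 2 * k + 1 := ⟨3 ^ s / 2, by have := hodd s; omega⟩
    have hu' : (3 ^ (2 * ℓ + 1) + 1) / 2 = 54 * e + 14 := by omega
    have hexp : (54 * e + 14) * (2 * k + 1)
        = (54 * e + 13 + (2 * k + 1)) + (108 * e + 26) * k := by ring
    have hn : 3 ^ (2 * ℓ + 1) - 1 = 108 * e + 26 := by omega
    rw [hu', hk, hexp, hn, Nat.add_mul_mod_self_left]
    apply Nat.mod_eq_of_lt
    have hsb : (3 : ℕ) ^ s ≤ 3 ^ (2 * ℓ) := Nat.pow_le_pow_right (by norm_num) hs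
    omega
  -- Step B: explicit residues of the C_v coset
  have stepB : ∀ s, s ≤ 2 * ℓ →
      (2 * 3 ^ ℓ + 1) * 3 ^ s % (3 ^ (2 * ℓ + 1) - 1)
        = 2 * 3 ^ ((ℓ + s) % (2 * ℓ + 1)) + 3 ^ s := by
    intro s hs
    have hval : (2 * 3 ^ ℓ + 1) * 3 ^ s = 2 * 3 ^ (ℓ + s) + 3 ^ s := by
      rw [pow_add]; ring
    have hn : 3 ^ (2 * ℓ + 1) - 1 = 108 * e + 26 := by omega
    set r := (ℓ + s) % (2 * ℓ + 1) with hr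
    have hrlt : r < 2 * ℓ + 1 := Nat.mod_lt _ (by omega)
    obtain hq := Nat.div_add_mod (ℓ + s) (2 * ℓ + 1)
    have hqlt : (ℓ + s) / (2 * ℓ + 1) < 2 := Nat.div_lt_of_lt_mul (by omega)
    set q := (ℓ + s) / (2 * ℓ + 1) with hqdef
    clear_value q
    have hq01 : q = 0 ∨ q = 1 := by omega
    have hrs : r ≠ s := by
      intro h
      rcases hq01 with h0 | h1
      · rw [h0] at hq; omega
      · rw [h1] at hq; omega
    have hbound : 2 * 3 ^ r + 3 ^ s < 108 * e + 26 := by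
      rcases Nat.lt_or_ge r s with hc | hc
      · have h1 : (3 : ℕ) ^ r ≤ 3 ^ (2 * ℓ - 1) :=
          Nat.pow_le_pow_right (by norm_num) (by omega)
        have h2 : (3 : ℕ) ^ s ≤ 3 ^ (2 * ℓ) := Nat.pow_le_pow_right (by norm_num) hs
        omega
      · have hc' : s < r := by omega
        have h1 : (3 : ℕ) ^ s ≤ 3 ^ (2 * ℓ - 1) :=
          Nat.pow_le_pow_right (by norm_num) (by omega)
        have h2 : (3 : ℕ) ^ r ≤ 3 ^ (2 * ℓ) :=
          Nat.pow_le_pow_right (by norm_num) (by omega)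
        omega
    rcases hq01 with h0 | h1
    · rw [h0] at hq
      have hls : ℓ + s = r := by omega
      rw [hval, hls, hn]
      exact Nat.mod_eq_of_lt hbound
    · rw [h1] at hq
      have hls : ℓ + s = (2 * ℓ + 1) + r := by omega
      rw [hval, hls, pow_add, hd2]
      have hexp : 2 * ((108 * e + 27) * 3 ^ r) + 3 ^ s
          = (2 * 3 ^ r + 3 ^ s) + (108 * e + 26) * (2 * 3 ^ r) := by ring
      have hn' : (108 * e + 27 : ℕ) - 1 = 108 * e + 26 := by omega
      rw [hexp, hn', Nat.add_mul_mod_self_left]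
      exact Nat.mod_eq_of_lt hbound
  have hne : ∀ s, s ≤ 2 * ℓ → (ℓ + s) % (2 * ℓ + 1) ≠ s := by
    intro s hs h
    obtain hq := Nat.div_add_mod (ℓ + s) (2 * ℓ + 1)
    have hqlt : (ℓ + s) / (2 * ℓ + 1) < 2 := Nat.div_lt_of_lt_mul (by omega)
    set q := (ℓ + s) / (2 * ℓ + 1) with hqdef
    clear_value q
    have hq01 : q = 0 ∨ q = 1 := by omega
    rcases hq01 with h0 | h1
    · rw [h0] at hq; omega
    · rw [h1] at hq; omega
  refine ⟨?_, ?_, ?_⟩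
  · rw [Finset.card_image_of_injOn, Finset.card_range]
    intro a ha b hb hab
    simp only [Finset.coe_range, Set.mem_Iio] at ha hb
    simp only at hab
    rw [stepA a (by omega), stepA b (by omega)] at hab
    have hab' : (3 : ℕ) ^ a = 3 ^ b := by omega
    exact Nat.pow_right_injective (by norm_num) hab'
  · rw [Finset.card_image_of_injOn, Finset.card_range]
    intro a ha b hb hab
    simp only [Finset.coe_range, Set.mem_Iio] at ha hb
    simp only at hab
    rw [stepB a (by omega), stepB b (by omega)] at hab
    obtain ⟨-, h2⟩ := key3 ((ℓ + a) % (2 * ℓ + 1) + (ℓ + b) % (2 * ℓ + 1) + a + b)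
      ((ℓ + a) % (2 * ℓ + 1)) a ((ℓ + b) % (2 * ℓ + 1)) b (by omega)
      (hne a (by omega)) (hne b (by omega)) hab
    exact h2
  · rw [Finset.eq_empty_iff_forall_notMem]
    intro x hx
    rw [Finset.mem_inter] at hx
    obtain ⟨hx1, hx2⟩ := hx
    simp only [Finset.mem_image, Finset.mem_range] at hx1 hx2
    obtain ⟨s, hs, hxs⟩ := hx1
    obtain ⟨t, ht, hxt⟩ := hx2
    rw [stepA s (by omega)] at hxs
    rw [stepB t (by omega)] at hxt
    have := hodd s
    have := hodd t
    have := hodd ((ℓ + t) % (2 * ℓ + 1))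
    omega
end

section
/- Let ℓ ≥ 1 be an integer, m = 2ℓ + 1, u = (3^m + 1)/2, v = 2·3^ℓ + 1, and let π be a generator of the multiplicative group GF(3^m)*. There do not exist nonzero c₁, c₂ ∈ GF(3) (viewed in GF(3^m) via the canonical embedding) and distinct integers 0 ≤ t₁ < t₂ ≤ 3^m - 2 such that c₁·π^{u·t₁} + c₂·π^{u·t₂} = 0 and c₁·π^{v·t₁} + c₂·π^{v·t₂} = 0. -/
/-- Let ℓ ≥ 1, m = 2ℓ + 1, u = (3^m + 1)/2, v = 2·3^ℓ + 1, and π a generator of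
GF(3^m)*. There are no nonzero c₁, c₂ ∈ GF(3) and integers 0 ≤ t₁ < t₂ ≤ 3^m - 2 with
c₁·π^{u·t₁} + c₂·π^{u·t₂} = 0 and c₁·π^{v·t₁} + c₂·π^{v·t₂} = 0.
(The code C_{(u,v)} has no codeword of weight 2.) -/
theorem stmt_10 (ℓ : ℕ) (hℓ : 1 ≤ ℓ) (m u v : ℕ)
    (hm : m = 2 * ℓ + 1) (hu : u = (3 ^ m + 1) / 2) (hv : v = 2 * 3 ^ ℓ + 1)
    (π : GaloisField 3 m) (hπ : orderOf π = 3 ^ m - 1) :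
    ¬ ∃ (c₁ c₂ : ZMod 3) (t₁ t₂ : ℕ), c₁ ≠ 0 ∧ c₂ ≠ 0 ∧
      t₁ < t₂ ∧ t₂ ≤ 3 ^ m - 2 ∧
      algebraMap (ZMod 3) (GaloisField 3 m) c₁ * π ^ (u * t₁) +
        algebraMap (ZMod 3) (GaloisField 3 m) c₂ * π ^ (u * t₂) = 0 ∧
      algebraMap (ZMod 3) (GaloisField 3 m) c₁ * π ^ (v * t₁) +
        algebraMap (ZMod 3) (GaloisField 3 m) c₂ * π ^ (v * t₂) = 0 := by
  rintro ⟨c₁, c₂, t₁, t₂, hc₁, hc₂, ht, ht₂, h1, h2⟩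
  set A := algebraMap (ZMod 3) (GaloisField 3 m) c₁ with hA
  set B := algebraMap (ZMod 3) (GaloisField 3 m) c₂ with hB
  set n := 3 ^ m - 1 with hn
  -- basic numeric facts
  have hx : 3 ≤ 3 ^ ℓ := by
    calc 3 = 3 ^ 1 := by norm_num
    _ ≤ 3 ^ ℓ := Nat.pow_le_pow_right (by norm_num) hℓ
  have h3m : 3 ^ m = 3 * (3 ^ ℓ) ^ 2 := by
    rw [hm]; ring
  have h2u : 2 * u = 3 ^ m + 1 := by
    rw [hu]
    have hodd : Odd (3 ^ m) := Odd.pow (by decide)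
    obtain ⟨r, hr⟩ := hodd
    omega
  have huv : v < u := by nlinarith [h2u, hx]
  -- u is even, v is odd
  have h9 : (8 : ℕ) ∣ 9 ^ ℓ - 1 := by
    have := Nat.sub_dvd_pow_sub_pow 9 1 ℓ
    simpa using this
  have h9' : 1 ≤ 9 ^ ℓ := Nat.one_le_pow _ _ (by norm_num)
  have h3m8 : 3 ^ m = 3 * 9 ^ ℓ := by
    rw [hm, pow_succ, pow_mul]; norm_num [Nat.mul_comm]
  have huEven : Even u := by
    obtain ⟨k, hk⟩ := h9
    have hu' : u = 12 * k + 2 := by omega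
    exact ⟨6 * k + 1, by omega⟩
  have hvOdd : Odd v := by rw [hv]; exact ⟨3 ^ ℓ, by ring⟩
  -- field facts
  have hπn : π ^ n = 1 := by rw [← hπ]; exact pow_orderOf_eq_one π
  have hn0 : 2 ≤ n := by
    have : 27 ≤ 3 ^ m := by
      calc (27:ℕ) = 3 ^ 3 := by norm_num
      _ ≤ 3 ^ m := Nat.pow_le_pow_right (by norm_num) (by omega)
    omega
  have hπ0 : π ≠ 0 := by
    intro h
    rw [h, zero_pow (by omega : n ≠ 0)] at hπn
    exact zero_ne_one hπn
  have hB0 : B ≠ 0 := by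
    simp only [hB, ne_eq, map_eq_zero_iff _ (algebraMap (ZMod 3) (GaloisField 3 m)).injective]
    exact hc₂
  have hsq1 : ∀ c : ZMod 3, c ≠ 0 → c ^ 2 = 1 := by decide
  have hA2 : A ^ 2 = 1 := by
    rw [hA, ← map_pow, hsq1 c₁ hc₁, map_one]
  have hB2 : B ^ 2 = 1 := by
    rw [hB, ← map_pow, hsq1 c₂ hc₂, map_one]
  set d := t₂ - t₁ with hd
  have hd0 : 0 < d := by omega
  have hdn : d < n := by omega
  -- extract π^(u*d) and π^(v*d)
  have key : ∀ w : ℕ, A * π ^ (w * t₁) + B * π ^ (w * t₂) = 0 →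
      B * π ^ (w * d) = -A := by
    intro w h
    have hsplit : π ^ (w * t₂) = π ^ (w * t₁) * π ^ (w * d) := by
      rw [← pow_add]; congr 1
      have h' : w * t₁ + w * d = w * (t₁ + d) := by ring
      rw [h']; congr 1; omega
    rw [hsplit] at h
    have h' : π ^ (w * t₁) * (A + B * π ^ (w * d)) = 0 := by
      linear_combination h
    have := (mul_eq_zero.mp h').resolve_left (pow_ne_zero _ hπ0)
    linear_combination this
  have hu' := key u h1
  have hv' := key v h2
  -- π^(2*(u*d)) = 1
  have hsq : π ^ (2 * (u * d)) = 1 := by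
    have hsq' : (B * π ^ (u * d)) ^ 2 = (-A) ^ 2 := by rw [hu']
    have h2' : B ^ 2 * π ^ (2 * (u * d)) = A ^ 2 := by
      rw [show (2 : ℕ) * (u * d) = u * d * 2 by ring, pow_mul]
      linear_combination hsq'
    rw [hA2, hB2, one_mul] at h2'
    exact h2'
  have hdvd1 : n ∣ 2 * (u * d) := by
    rw [← hπ]; exact orderOf_dvd_of_pow_eq_one hsq
  -- n ∣ 2d, hence 2d = n
  have hdvd2 : n ∣ 2 * d := by
    have h2ud : 2 * (u * d) = n * d + 2 * d := by
      have h' : 2 * u = n + 2 := by omega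
      calc 2 * (u * d) = (2 * u) * d := by ring
      _ = (n + 2) * d := by rw [h']
      _ = n * d + 2 * d := by ring
    have := Nat.dvd_sub hdvd1 (Dvd.intro d rfl)
    rwa [h2ud, Nat.add_sub_cancel_left] at this
  have h2dn : 2 * d = n := by
    have hnle : n ≤ 2 * d := Nat.le_of_dvd (by omega) hdvd2
    obtain ⟨k, hk⟩ := hdvd2
    have hk1 : k = 1 := by nlinarith
    subst hk1
    omega
  -- π^(u*d) = π^(v*d)
  have hπuv : π ^ (u * d) = π ^ (v * d) :=
    mul_left_cancel₀ hB0 (hu'.trans hv'.symm)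
  have hone : π ^ ((u - v) * d) = 1 := by
    have hsum : π ^ ((u - v) * d) * π ^ (v * d) = π ^ (u * d) := by
      rw [← pow_add]; congr 1
      have h' : (u - v) * d + v * d = ((u - v) + v) * d := by ring
      rw [h']; congr 1; omega
    rw [hπuv] at hsum
    exact mul_right_cancel₀ (pow_ne_zero _ hπ0) (hsum.trans (one_mul _).symm)
  have hdvd3 : n ∣ (u - v) * d := by
    rw [← hπ]; exact orderOf_dvd_of_pow_eq_one hone
  -- contradiction: 2 ∣ u - v but u - v is odd
  rw [← h2dn] at hdvd3
  obtain ⟨j, hj⟩ := hdvd3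
  have huvj : u - v = 2 * j := by
    have h' : (u - v) * d = (2 * j) * d := by rw [hj]; ring
    exact Nat.eq_of_mul_eq_mul_right hd0 h'
  have hodd : Odd (u - v) := Nat.Even.sub_odd (le_of_lt huv) huEven hvOdd
  obtain ⟨c, hc⟩ := hodd
  omega
end

section
/- Let ℓ ≥ 1 be an integer, m = 2ℓ + 1, u = (3^m + 1)/2, v = 2·3^ℓ + 1, and let π be a generator of the multiplicative group GF(3^m)*. There do not exist nonzero c₁, c₂, c₃ ∈ GF(3) (viewed in GF(3^m) via the canonical embedding) and distinct integers 0 ≤ t₁ < t₂ < t₃ ≤ 3^m - 2 such that c₁·π^{u·t₁} + c₂·π^{u·t₂} + c₃·π^{u·t₃} = 0 and c₁·π^{v·t₁} + c₂·π^{v·t₂} + c₃·π^{v·t₃} = 0. -/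
private lemma aux_pow3_mul {F : Type*} [Monoid F] (t : F) (a : ℕ) (ha : t ^ 3 ^ a = t) :
    ∀ k, t ^ 3 ^ (a * k) = t := by
  intro k
  induction k with
  | zero => simp
  | succ n ih => rw [Nat.mul_succ, pow_add, pow_mul, ih, ha]

private lemma aux_pow3_mod {F : Type*} [Monoid F] (t : F) (a b : ℕ) (ha : t ^ 3 ^ a = t)
    (hb : t ^ 3 ^ b = t) : t ^ 3 ^ (b % a) = t := by
  calc t ^ 3 ^ (b % a) = (t ^ 3 ^ (a * (b / a))) ^ 3 ^ (b % a) := by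
        rw [aux_pow3_mul t a ha (b / a)]
    _ = t ^ (3 ^ (a * (b / a)) * 3 ^ (b % a)) := (pow_mul t _ _).symm
    _ = t ^ 3 ^ (a * (b / a) + b % a) := by rw [← pow_add]
    _ = t ^ 3 ^ b := by rw [Nat.div_add_mod b a]
    _ = t := hb

private lemma aux_pow3_gcd {F : Type*} [Monoid F] (t : F) :
    ∀ a b : ℕ, t ^ 3 ^ a = t → t ^ 3 ^ b = t → t ^ 3 ^ (Nat.gcd a b) = t := by
  intro a
  induction a using Nat.strong_induction_on with
  | _ a ih =>
    intro b ha hb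
    match a, ha with
    | 0, _ => simpa using hb
    | (n+1), ha =>
      rw [Nat.gcd_rec]
      exact ih (b % (n+1)) (Nat.mod_lt _ (Nat.succ_pos n)) (n+1)
        (aux_pow3_mod t (n+1) b ha hb) ha

private lemma aux_pow3_mod3 {F : Type*} [Monoid F] (t : F) (h27 : t ^ 27 = t) :
    ∀ a : ℕ, t ^ 3 ^ a = t ^ 3 ^ (a % 3) := by
  intro a
  induction a using Nat.strong_induction_on with
  | _ a ih =>
    rcases Nat.lt_or_ge a 3 with h | h
    · rw [Nat.mod_eq_of_lt h]
    · have ea : (3:ℕ) ^ a = 27 * 3 ^ (a - 3) := by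
        rw [show (27:ℕ) = 3 ^ 3 from rfl, ← pow_add]
        congr 1
        omega
      have step : t ^ 3 ^ a = t ^ 3 ^ (a - 3) := by
        rw [ea, pow_mul, h27]
      rw [step, ih (a - 3) (by omega), show (a - 3) % 3 = a % 3 by omega]

private lemma aux_zmod3 : ∀ c : ZMod 3, c ≠ 0 → c ^ 2 = 1 := by decide

private lemma aux_sq_cases {F : Type*} [Field F] {s : F} (hs : s ^ 2 = 1) : s = 1 ∨ s = -1 := by
  have h := mul_eq_zero.mp (show (s - 1) * (s + 1) = 0 by linear_combination hs)
  rcases h with h | h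
  · exact Or.inl (sub_eq_zero.mp h)
  · exact Or.inr (eq_neg_of_add_eq_zero_left h)

private lemma aux_h19 {F : Type*} [Monoid F] (ℓ m : ℕ) (hm : m = 2 * ℓ + 1)
    (hcard : ∀ x : F, x ^ 3 ^ m = x) (p0 p1 p2 : F)
    (hp23 : p2 ^ 3 = p0) (hp0q : p0 ^ (3:ℕ) ^ ℓ = p1) (h27 : p2 ^ 27 = p2) :
    p1 = p2 ^ 9 := by
  have hm3 : p2 ^ 3 ^ m = p2 := hcard p2
  have hp1pow : p1 = p2 ^ 3 ^ (ℓ + 1) := by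
    rw [← hp0q, ← hp23, ← pow_mul, show 3 * (3:ℕ) ^ ℓ = 3 ^ (ℓ + 1) by rw [pow_succ]; ring]
  have hmod : p1 = p2 ^ 3 ^ ((ℓ + 1) % 3) := by rw [hp1pow, aux_pow3_mod3 p2 h27 (ℓ + 1)]
  have h3p_of : ¬ (3 ∣ m) → p2 ^ 3 = p2 := by
    intro hnd
    have hco : Nat.gcd 3 m = 1 := (Nat.Prime.coprime_iff_not_dvd Nat.prime_three).mpr hnd
    have h33 : p2 ^ (3:ℕ) ^ 3 = p2 := by rw [show (3:ℕ) ^ 3 = 27 from rfl]; exact h27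
    have hg := aux_pow3_gcd p2 3 m h33 hm3
    rw [hco, pow_one] at hg
    exact hg
  rcases (show (ℓ + 1) % 3 = 0 ∨ (ℓ + 1) % 3 = 1 ∨ (ℓ + 1) % 3 = 2 by omega) with h | h | h
  · have h3p : p2 ^ 3 = p2 := h3p_of (by omega)
    have h9 : p2 ^ 9 = p2 := by rw [show (9:ℕ) = 3 * 3 from rfl, pow_mul, h3p, h3p]
    rw [hmod, h, pow_zero, pow_one, h9]
  · have h3p : p2 ^ 3 = p2 := h3p_of (by omega)
    have h9 : p2 ^ 9 = p2 := by rw [show (9:ℕ) = 3 * 3 from rfl, pow_mul, h3p, h3p]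
    rw [hmod, h, pow_one, h3p, h9]
  · rw [hmod, h]
    norm_num

private lemma aux_core {F : Type*} [Field F] [CharP F 3] (ℓ m : ℕ) (hℓ : 1 ≤ ℓ)
    (hm : m = 2 * ℓ + 1) (hcard : ∀ x : F, x ^ 3 ^ m = x)
    (E G σ τ y z : F) (hE : E ^ 2 = 1) (hG : G ^ 2 = 1) (hσ2 : σ ^ 2 = 1) (hτ2 : τ ^ 2 = 1)
    (hy0 : y ≠ 0) (hz0 : z ≠ 0) (hy1 : y ≠ 1) (hz1 : z ≠ 1) (hyz : y ≠ z)
    (hA : E * σ * y + G * τ * z + 1 = 0)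
    (hB : E * (y ^ 3 ^ ℓ) ^ 2 * y + G * (z ^ 3 ^ ℓ) ^ 2 * z + 1 = 0) : False := by
  haveI : Fact (Nat.Prime 3) := ⟨by norm_num⟩
  haveI : ExpChar F 3 := inferInstance
  have h3 : (3 : F) = 0 := by exact_mod_cast CharP.cast_eq_zero F 3
  have hoddpow : ∀ s : F, s ^ 2 = 1 → s ^ (3:ℕ) ^ ℓ = s := by
    intro s hs
    obtain ⟨k, hk⟩ := (Odd.pow (by decide : Odd 3) : Odd ((3:ℕ) ^ ℓ))
    rw [hk, pow_add, pow_mul, hs, one_pow, pow_one, one_mul]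
  obtain ⟨e, he_def⟩ : ∃ e : F, e = E * σ := ⟨_, rfl⟩
  obtain ⟨f, hf_def⟩ : ∃ f : F, f = G * τ := ⟨_, rfl⟩
  have he2 : e ^ 2 = 1 := by rw [he_def]; linear_combination σ^2 * hE + hσ2
  have hf2 : f ^ 2 = 1 := by rw [hf_def]; linear_combination τ^2 * hG + hτ2
  have hep : e ^ (3:ℕ) ^ ℓ = e := hoddpow e he2
  have hfp : f ^ (3:ℕ) ^ ℓ = f := hoddpow f hf2
  have hσp : σ ^ (3:ℕ) ^ ℓ = σ := hoddpow σ hσ2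
  have hτp : τ ^ (3:ℕ) ^ ℓ = τ := hoddpow τ hτ2
  have hAe : e * y + f * z + 1 = 0 := by rw [he_def, hf_def]; linear_combination hA
  have hBe : e * σ * (y ^ (3:ℕ) ^ ℓ) ^ 2 * y + f * τ * (z ^ (3:ℕ) ^ ℓ) ^ 2 * z + 1 = 0 := by
    rw [he_def, hf_def]
    linear_combination hB + (E * (y ^ (3:ℕ) ^ ℓ) ^ 2 * y) * hσ2 + (G * (z ^ (3:ℕ) ^ ℓ) ^ 2 * z) * hτ2
  have hAe1 : e * y ^ (3:ℕ) ^ ℓ + f * z ^ (3:ℕ) ^ ℓ + 1 = 0 := by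
    have h := congrArg (iterateFrobenius F 3 ℓ) hAe
    simp only [map_add, map_mul, map_one, map_zero, iterateFrobenius_def] at h
    rw [hep, hfp] at h
    exact h
  obtain ⟨p0, hp0_def⟩ : ∃ w : F, w = e * y := ⟨_, rfl⟩
  obtain ⟨p1, hp1_def⟩ : ∃ w : F, w = e * y ^ (3:ℕ) ^ ℓ := ⟨_, rfl⟩
  obtain ⟨p2, hp2_def⟩ : ∃ w : F, w = e * (y ^ (3:ℕ) ^ ℓ) ^ (3:ℕ) ^ ℓ := ⟨_, rfl⟩
  have hy2 : ((y ^ (3:ℕ) ^ ℓ) ^ (3:ℕ) ^ ℓ) ^ 3 = y := by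
    rw [← pow_mul, ← pow_mul, show (3:ℕ) ^ ℓ * (3 ^ ℓ * 3) = 3 ^ m by
      rw [hm, pow_succ, two_mul, pow_add]; ring]
    exact hcard y
  have hp23 : p2 ^ 3 = p0 := by
    rw [hp2_def, hp0_def, mul_pow, hy2]; linear_combination y * e * he2
  have hp0q : p0 ^ (3:ℕ) ^ ℓ = p1 := by rw [hp0_def, hp1_def, mul_pow, hep]
  have hp1q : p1 ^ (3:ℕ) ^ ℓ = p2 := by rw [hp1_def, hp2_def, mul_pow, hep]
  have hB0p : σ * p1 ^ 2 * p0 - τ * (1 + p1) ^ 2 * (1 + p0) + 1 = 0 := by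
    rw [hp0_def, hp1_def]
    linear_combination hBe + (σ * e * (y ^ (3:ℕ) ^ ℓ) ^ 2 * y) * he2
      - (τ * (1 + e * y ^ (3:ℕ) ^ ℓ) ^ 2) * hAe
      + (τ * f * z * ((1 + e * y ^ (3:ℕ) ^ ℓ) - f * z ^ (3:ℕ) ^ ℓ)) * hAe1
      + (τ * f * z * (z ^ (3:ℕ) ^ ℓ) ^ 2) * hf2
  have hB1p : σ * p2 ^ 2 * p1 - τ * (1 + p2) ^ 2 * (1 + p1) + 1 = 0 := by
    have h := congrArg (iterateFrobenius F 3 ℓ) hB0p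
    simp only [map_add, map_sub, map_mul, map_one, map_zero, map_pow, iterateFrobenius_def] at h
    rw [hσp, hτp, hp0q, hp1q] at h
    exact h
  have hB0c : σ * p1 ^ 2 * p2 ^ 3 - τ * (1 + p1) ^ 2 * (1 + p2 ^ 3) + 1 = 0 := by
    rw [hp23]; exact hB0p
  have he0 : e ≠ 0 := by intro h; rw [h] at he2; simp at he2
  have hf0 : f ≠ 0 := by intro h; rw [h] at hf2; simp at hf2
  -- endgame helpers
  have endY : p2 = 0 → False := by
    intro h
    have hp0v : p0 = 0 := by rw [← hp23, h]; norm_num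
    rw [hp0v] at hp0_def
    exact hy0 ((mul_eq_zero.mp hp0_def.symm).resolve_left he0)
  have endZ : p2 = -1 → False := by
    intro h
    have hp0v : p0 = -1 := by rw [← hp23, h]; norm_num
    have hey : e * y = -1 := (hp0_def.symm).trans hp0v
    have hfz : f * z = 0 := by linear_combination hAe - hey
    exact hz0 ((mul_eq_zero.mp hfz).resolve_left hf0)
  have endO : p2 = 1 → False := by
    intro h
    have hp0v : p0 = 1 := by rw [← hp23, h]; norm_num
    have hey : e * y = 1 := (hp0_def.symm).trans hp0v
    have hfz : f * z = 1 := by linear_combination hAe - hey - h3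
    have hy : y = e := by linear_combination e * hey - y * he2
    have hz : z = f := by linear_combination f * hfz - z * hf2
    rcases aux_sq_cases he2 with he1 | hem
    · exact hy1 (by rw [hy, he1])
    · rcases aux_sq_cases hf2 with hf1 | hfm
      · exact hz1 (by rw [hz, hf1])
      · exact hyz (by rw [hy, hz, hem, hfm])
  rcases aux_sq_cases hσ2 with hσc | hσc <;> rcases aux_sq_cases hτ2 with hτc | hτc <;>
    rw [hσc, hτc] at hB0c hB1p
  -- case pp: sigma=1 tau=1
  · have hR : p2 * (p2 + 1) * (p2 - 1) ^ 4 = 0 := by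
      linear_combination (((-1:F) + (-2:F)*p2))^2*hB0c - ((((-1:F)))*((((-1:F) + (-2:F)*p2))*p1 - (((-2:F)*p2 + (-1:F)*p2^2))) + (((-2:F) + (-2:F)*p2^3))*(((-1:F) + (-2:F)*p2)))*hB1p + (((-1:F)*p2 + (-3:F)*p2^2 + p2^3 + p2^4 + (-3:F)*p2^5 + (-1:F)*p2^6))*h3
    rcases mul_eq_zero.mp hR with h | h
    · rcases mul_eq_zero.mp h with h | h
      · exact endY h
      · exact endZ (eq_neg_of_add_eq_zero_left h)
    · exact endO (sub_eq_zero.mp (pow_eq_zero_iff (by norm_num : 4 ≠ 0) |>.mp h))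
  -- case pm: sigma=1 tau=-1
  · have hR : (-1:F) + p2 + p2^3 + p2^4 + p2^6 + (-1:F)*p2^7 = 0 := by
      linear_combination (((1:F) + (2:F)*p2 + (2:F)*p2^2))^2*hB0c - ((((1:F) + (2:F)*p2^3))*((((1:F) + (2:F)*p2 + (2:F)*p2^2))*p1 - (((2:F) + (2:F)*p2 + p2^2))) + (((2:F) + (2:F)*p2^3))*(((1:F) + (2:F)*p2 + (2:F)*p2^2)))*hB1p + (((-1:F) + (-1:F)*p2 + (-2:F)*p2^2 + (-4:F)*p2^3 + (-4:F)*p2^4 + (-2:F)*p2^5 + (-1:F)*p2^6 + (-1:F)*p2^7))*h3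
    have h27 : p2 ^ 27 = p2 := by
      linear_combination (p2 + p2^2 + p2^3 + (-1:F)*p2^4 + p2^5 + p2^7 + p2^8 + (-1:F)*p2^9 + p2^10 + (-1:F)*p2^11 + p2^12 + (-1:F)*p2^13 + (-1:F)*p2^14 + (-1:F)*p2^16 + p2^17 + (-1:F)*p2^18 + (-1:F)*p2^19 + (-1:F)*p2^20)*hR + ((-1:F)*p2^4 + (-1:F)*p2^6 + (-1:F)*p2^9 + p2^10 + (-2:F)*p2^11 + p2^12 + (-1:F)*p2^13 + p2^15 + (-1:F)*p2^16 + (2:F)*p2^17 + (-1:F)*p2^18 + p2^19 + p2^22 + p2^24)*h3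
    have h19 : p1 = p2 ^ 9 := by
      apply aux_h19 ℓ m hm hcard p0 p1 p2 hp23 hp0q h27
    rw [h19] at hB1p
    have hgoal : p2 + 1 = 0 := by
      linear_combination ((1:F) + p2^2 + (-1:F)*p2^4 + p2^5 + p2^6 + p2^7 + (-1:F)*p2^8 + p2^9)*hR + ((1:F) + (-1:F)*p2 + p2^2 + (-1:F)*p2^5)*hB1p - (p2^3 + p2^4 + (-1:F)*p2^5 + (-1:F)*p2^7 + p2^8 + p2^10 + p2^11 + p2^13 + (-1:F)*p2^14 + (-1:F)*p2^16)*h3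
    exact endZ (eq_neg_of_add_eq_zero_left hgoal)
  -- case mp: sigma=-1 tau=1
  · have hR : p2 + p2^3 + (-1:F)*p2^6 + p2^7 = 0 := by
      linear_combination (((-1:F) + (-2:F)*p2 + (-2:F)*p2^2))^2*hB0c - ((((-1:F) + (-2:F)*p2^3))*((((-1:F) + (-2:F)*p2 + (-2:F)*p2^2))*p1 - (((-2:F)*p2 + (-1:F)*p2^2))) + (((-2:F) + (-2:F)*p2^3))*(((-1:F) + (-2:F)*p2 + (-2:F)*p2^2)))*hB1p + (((-1:F)*p2 + (-2:F)*p2^2 + (-2:F)*p2^3 + (-1:F)*p2^4 + (2:F)*p2^5 + p2^6 + p2^7))*h3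
    have h27 : p2 ^ 27 = p2 := by
      linear_combination ((-1:F) + p2^2 + (-1:F)*p2^4 + (-1:F)*p2^5 + (-1:F)*p2^6 + (-1:F)*p2^7 + p2^13 + (-1:F)*p2^15 + p2^17 + p2^18 + p2^19 + p2^20)*hR + (p2^7 + p2^8 + (-1:F)*p2^20 + (-1:F)*p2^21)*h3
    have h19 : p1 = p2 ^ 9 := by
      apply aux_h19 ℓ m hm hcard p0 p1 p2 hp23 hp0q h27
    rw [h19] at hB1p
    have hgoal : p2 = 0 := by
      linear_combination ((-1:F) + p2 + p2^2 + p2^3 + p2^6 + p2^8 + p2^9)*hR + ((-1:F) + p2 + p2^2 + (-1:F)*p2^3 + p2^4 + (-1:F)*p2^5)*hB1p - ((-1:F)*p2^3 + p2^4 + p2^6 + p2^9 + p2^10 + (-1:F)*p2^12 + p2^16)*h3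
    exact endY hgoal
  -- case mm: sigma=-1 tau=-1
  · have hR : (-1:F) + p2 + (-1:F)*p2^4 + (-1:F)*p2^6 = 0 := by
      linear_combination (((1:F) + (2:F)*p2))^2*hB0c - ((((1:F)))*((((1:F) + (2:F)*p2))*p1 - (((2:F) + (2:F)*p2 + p2^2))) + (((2:F) + (2:F)*p2^3))*(((1:F) + (2:F)*p2)))*hB1p + (((-1:F) + (-1:F)*p2 + (-2:F)*p2^2 + p2^3 + (2:F)*p2^4 + (2:F)*p2^5 + p2^6))*h3
    have h27 : p2 ^ 27 = p2 := by
      linear_combination (p2 + p2^2 + p2^3 + p2^4 + (-1:F)*p2^6 + p2^8 + (-1:F)*p2^14 + (-1:F)*p2^15 + (-1:F)*p2^16 + (-1:F)*p2^17 + p2^19 + (-1:F)*p2^21)*hR + (p2^7 + p2^8 + (-1:F)*p2^20 + (-1:F)*p2^21)*h3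
    have h19 : p1 = p2 ^ 9 := by
      apply aux_h19 ℓ m hm hcard p0 p1 p2 hp23 hp0q h27
    rw [h19] at hB1p
    have hgoal : (1:F) = 0 := by
      linear_combination ((-1:F)*p2^2 + (-1:F)*p2^3 + p2^4 + (-1:F)*p2^5 + p2^6 + (-1:F)*p2^7 + (-1:F)*p2^8)*hR + ((-1:F) + p2 + (-1:F)*p2^2 + (-1:F)*p2^3 + p2^4)*hB1p - ((-1:F) + (-1:F)*p2^3 + (-1:F)*p2^4 + p2^5 + p2^7 + (-1:F)*p2^10 + p2^11 + (-1:F)*p2^12 + p2^14)*h3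
    exact one_ne_zero hgoal

/-- Let ℓ ≥ 1, m = 2ℓ + 1, u = (3^m + 1)/2, v = 2·3^ℓ + 1, and π a generator of
GF(3^m)*. There are no nonzero c₁, c₂, c₃ ∈ GF(3) and integers
0 ≤ t₁ < t₂ < t₃ ≤ 3^m - 2 with c₁·π^{u·t₁} + c₂·π^{u·t₂} + c₃·π^{u·t₃} = 0 and
c₁·π^{v·t₁} + c₂·π^{v·t₂} + c₃·π^{v·t₃} = 0.
(The code C_{(u,v)} has no codeword of weight 3.) -/
theorem stmt_11 (ℓ : ℕ) (hℓ : 1 ≤ ℓ) (m u v : ℕ)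
    (hm : m = 2 * ℓ + 1) (hu : u = (3 ^ m + 1) / 2) (hv : v = 2 * 3 ^ ℓ + 1)
    (π : GaloisField 3 m) (hπ : orderOf π = 3 ^ m - 1) :
    ¬ ∃ (c₁ c₂ c₃ : ZMod 3) (t₁ t₂ t₃ : ℕ), c₁ ≠ 0 ∧ c₂ ≠ 0 ∧ c₃ ≠ 0 ∧
      t₁ < t₂ ∧ t₂ < t₃ ∧ t₃ ≤ 3 ^ m - 2 ∧
      algebraMap (ZMod 3) (GaloisField 3 m) c₁ * π ^ (u * t₁) +
        algebraMap (ZMod 3) (GaloisField 3 m) c₂ * π ^ (u * t₂) +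
        algebraMap (ZMod 3) (GaloisField 3 m) c₃ * π ^ (u * t₃) = 0 ∧
      algebraMap (ZMod 3) (GaloisField 3 m) c₁ * π ^ (v * t₁) +
        algebraMap (ZMod 3) (GaloisField 3 m) c₂ * π ^ (v * t₂) +
        algebraMap (ZMod 3) (GaloisField 3 m) c₃ * π ^ (v * t₃) = 0 := by
  haveI : Fact (Nat.Prime 3) := ⟨by norm_num⟩
  rintro ⟨c₁, c₂, c₃, t₁, t₂, t₃, hc₁, hc₂, hc₃, h12, h23, ht₃, heq1, heq2⟩
  have hm0 : m ≠ 0 := by omega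
  haveI : Fintype (GaloisField 3 m) := Fintype.ofFinite _
  have hcardF : Fintype.card (GaloisField 3 m) = 3 ^ m := by
    rw [← Nat.card_eq_fintype_card]; exact GaloisField.card 3 m hm0
  have hcard : ∀ x : GaloisField 3 m, x ^ 3 ^ m = x := by
    intro x; rw [← hcardF]; exact FiniteField.pow_card x
  have h3le : 3 ≤ 3 ^ m := by
    calc (3:ℕ) = 3 ^ 1 := rfl
    _ ≤ 3 ^ m := Nat.pow_le_pow_right (by norm_num) (by omega)
  have hπ1 : π ^ (3 ^ m - 1) = 1 := by rw [← hπ]; exact pow_orderOf_eq_one π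
  have hπ0 : π ≠ 0 := by
    intro h
    rw [h, zero_pow (by omega : 3 ^ m - 1 ≠ 0)] at hπ1
    exact zero_ne_one hπ1
  have hdist : ∀ a b : ℕ, a < b → b ≤ 3 ^ m - 2 → π ^ a ≠ π ^ b := by
    intro a b hab hb h
    have h2 : π ^ a * π ^ (b - a) = π ^ a * 1 := by
      rw [mul_one, ← pow_add, show a + (b - a) = b by omega]; exact h.symm
    have h4 : π ^ (b - a) = 1 := mul_left_cancel₀ (pow_ne_zero a hπ0) h2
    have h5 := orderOf_dvd_of_pow_eq_one h4
    rw [hπ] at h5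
    have := Nat.le_of_dvd (by omega) h5
    omega
  have hcsq : ∀ c : ZMod 3, c ≠ 0 → (algebraMap (ZMod 3) (GaloisField 3 m) c) ^ 2 = 1 := by
    intro c hc
    have h : c ^ 2 = 1 := aux_zmod3 c hc
    rw [← map_pow, h, map_one]
  obtain ⟨j, hj⟩ : ∃ j : ℕ, 3 ^ m = 2 * j + 1 := (Odd.pow (by decide : Odd 3) : Odd (3 ^ m))
  have hu' : u = j + 1 := by omega
  have hxu : ∀ t : ℕ, π ^ (u * t) = (π ^ t) ^ j * π ^ t := by
    intro t
    rw [show u * t = t * j + t by rw [hu']; ring, pow_add, pow_mul]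
  have hxv : ∀ t : ℕ, π ^ (v * t) = ((π ^ t) ^ 3 ^ ℓ) ^ 2 * π ^ t := by
    intro t
    rw [show v * t = t * 3 ^ ℓ * 2 + t by rw [hv]; ring, pow_add, pow_mul, pow_mul]
  rw [hxu t₁, hxu t₂, hxu t₃] at heq1
  rw [hxv t₁, hxv t₂, hxv t₃] at heq2
  have hsq : ∀ t : ℕ, ((π ^ t) ^ j) ^ 2 = 1 := by
    intro t
    have h1 : ((π ^ t) ^ j) ^ 2 = (π ^ (3 ^ m - 1)) ^ t := by
      rw [← pow_mul, ← pow_mul, ← pow_mul]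
      congr 1
      rw [hj, Nat.add_sub_cancel]
      ring
    rw [h1, hπ1, one_pow]
  have hx1 : (π : GaloisField 3 m) ^ t₁ ≠ 0 := pow_ne_zero _ hπ0
  have hx2 : (π : GaloisField 3 m) ^ t₂ ≠ 0 := pow_ne_zero _ hπ0
  have hx3 : (π : GaloisField 3 m) ^ t₃ ≠ 0 := pow_ne_zero _ hπ0
  have hx3q : ((π : GaloisField 3 m) ^ t₃) ^ 3 ^ ℓ ≠ 0 := pow_ne_zero _ hx3
  have hinv : (π : GaloisField 3 m) ^ t₃ * (π ^ t₃)⁻¹ = 1 := mul_inv_cancel₀ hx3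
  have hinvq : ((π : GaloisField 3 m) ^ t₃) ^ 3 ^ ℓ * ((π ^ t₃) ^ 3 ^ ℓ)⁻¹ = 1 :=
    mul_inv_cancel₀ hx3q
  set c₁' := algebraMap (ZMod 3) (GaloisField 3 m) c₁ with hc1'd
  set c₂' := algebraMap (ZMod 3) (GaloisField 3 m) c₂ with hc2'd
  set c₃' := algebraMap (ZMod 3) (GaloisField 3 m) c₃ with hc3'd
  have hA' : (c₁' * c₃') * ((π ^ t₁) ^ j * (π ^ t₃) ^ j) * (π ^ t₁)
      + (c₂' * c₃') * ((π ^ t₂) ^ j * (π ^ t₃) ^ j) * (π ^ t₂) + π ^ t₃ = 0 := by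
    linear_combination (c₃' * (π ^ t₃) ^ j) * heq1 - (π ^ t₃ * ((π ^ t₃) ^ j) ^ 2) * hcsq c₃ hc₃
      - (π ^ t₃) * hsq t₃
  have hB' : (c₁' * c₃') * ((π ^ t₁) ^ 3 ^ ℓ) ^ 2 * (π ^ t₁)
      + (c₂' * c₃') * ((π ^ t₂) ^ 3 ^ ℓ) ^ 2 * (π ^ t₂)
      + ((π ^ t₃) ^ 3 ^ ℓ) ^ 2 * (π ^ t₃) = 0 := by
    linear_combination c₃' * heq2 - (((π ^ t₃) ^ 3 ^ ℓ) ^ 2 * (π ^ t₃)) * hcsq c₃ hc₃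
  refine aux_core (F := GaloisField 3 m) ℓ m hℓ hm hcard
    (c₁' * c₃') (c₂' * c₃') ((π ^ t₁) ^ j * (π ^ t₃) ^ j) ((π ^ t₂) ^ j * (π ^ t₃) ^ j)
    (π ^ t₁ * (π ^ t₃)⁻¹) (π ^ t₂ * (π ^ t₃)⁻¹)
    ?_ ?_ ?_ ?_ ?_ ?_ ?_ ?_ ?_ ?_ ?_
  · linear_combination ((c₃') ^ 2) * hcsq c₁ hc₁ + hcsq c₃ hc₃
  · linear_combination ((c₃') ^ 2) * hcsq c₂ hc₂ + hcsq c₃ hc₃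
  · linear_combination (((π ^ t₃) ^ j) ^ 2) * hsq t₁ + hsq t₃
  · linear_combination (((π ^ t₃) ^ j) ^ 2) * hsq t₂ + hsq t₃
  · exact mul_ne_zero hx1 (inv_ne_zero hx3)
  · exact mul_ne_zero hx2 (inv_ne_zero hx3)
  · intro h
    exact hdist t₁ t₃ (lt_trans h12 h23) ht₃ ((mul_inv_eq_one₀ hx3).mp h)
  · intro h
    exact hdist t₂ t₃ h23 ht₃ ((mul_inv_eq_one₀ hx3).mp h)
  · intro h
    exact hdist t₁ t₂ h12 (by omega) (mul_right_cancel₀ (inv_ne_zero hx3) h)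
  · linear_combination ((π ^ t₃)⁻¹) * hA' - hinv
  · simp only [mul_pow, inv_pow]
    linear_combination ((((π ^ t₃) ^ 3 ^ ℓ)⁻¹) ^ 2 * (π ^ t₃)⁻¹) * hB' - hinv
      - (π ^ t₃ * (π ^ t₃)⁻¹ * ((π ^ t₃) ^ 3 ^ ℓ * ((π ^ t₃) ^ 3 ^ ℓ)⁻¹ + 1)) * hinvq
end

section
/- Let ℓ ≥ 1 be an integer, m = 2ℓ + 1, u = (3^m + 1)/2, and v = 2·3^ℓ + 1. There do not exist y₁, y₂ ∈ GF(3^m) with y₁ ≠ 0, y₂ ≠ 0, y₁ ≠ 1, y₂ ≠ 1, and y₁ ≠ y₂, such that y₁^u + y₂^u + 1 = 0 and y₁^v + y₂^v + 1 = 0. -/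
private lemma aux_pow_mul {M : Type*} [Monoid M] (x : M) (p i q : ℕ)
    (h : x ^ p ^ i = x) : x ^ p ^ (i * q) = x := by
  induction q with
  | zero => simp
  | succ n ih => rw [Nat.mul_succ, pow_add, pow_mul, ih, h]

private lemma aux_pow_gcd {M : Type*} [Monoid M] (x : M) (p : ℕ) :
    ∀ i j, x ^ p ^ i = x → x ^ p ^ j = x → x ^ p ^ (Nat.gcd i j) = x := by
  intro i
  induction i using Nat.strong_induction_on with
  | _ i ih =>
    match i with
    | 0 => intro j _ hj; simpa using hj
    | (k+1) =>
      intro j hi hj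
      rw [Nat.gcd_rec]
      refine ih _ (Nat.mod_lt _ (Nat.succ_pos k)) _ ?_ hi
      have key : x ^ p ^ ((k+1) * (j / (k+1))) = x := aux_pow_mul x p (k+1) _ hi
      calc x ^ p ^ (j % (k+1)) = (x ^ p ^ ((k+1) * (j / (k+1)))) ^ p ^ (j % (k+1)) := by rw [key]
        _ = x ^ p ^ ((k+1) * (j / (k+1)) + j % (k+1)) := by rw [← pow_mul, ← pow_add]
        _ = x ^ p ^ j := by rw [Nat.div_add_mod]
        _ = x := hj

private lemma casePM (ℓ m : ℕ) (hℓ : 1 ≤ ℓ) (hm : m = 2 * ℓ + 1) (a b : GaloisField 3 m)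
    (hb0 : b ≠ 0) (hba : b = a + 1)
    (hB : (a ^ 3 ^ ℓ) ^ 2 * a + (b ^ 3 ^ ℓ) ^ 2 * b + 1 = 0) : False := by
  set ψ : GaloisField 3 m →+* GaloisField 3 m := iterateFrobenius (GaloisField 3 m) 3 ℓ
    with hψdef
  have hm0 : m ≠ 0 := by omega
  have hchar : (3 : GaloisField 3 m) = 0 := by
    have := CharP.cast_eq_zero (GaloisField 3 m) 3
    exact_mod_cast this
  haveI : Fintype (GaloisField 3 m) := Fintype.ofFinite _
  have hcard : Fintype.card (GaloisField 3 m) = 3 ^ m := by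
    rw [← Nat.card_eq_fintype_card, GaloisField.card 3 m hm0]
  have hfix : ∀ y : GaloisField 3 m, y ^ 3 ^ m = y := fun y => by
    rw [← hcard]; exact FiniteField.pow_card y
  have hψ : ∀ y : GaloisField 3 m, ψ y = y ^ 3 ^ ℓ := by
    intro y; rw [hψdef]; exact iterateFrobenius_def 3 ℓ y
  rw [← hψ a, ← hψ b] at hB
  set t := ψ a with ht
  set c := ψ t with hc
  have hc3 : c ^ 3 = a := by
    rw [hc, ht, hψ, hψ, ← pow_mul, ← pow_mul,
      show 3 ^ ℓ * (3 ^ ℓ * 3) = 3 ^ m by rw [hm]; ring]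
    exact hfix a
  have hψb : ψ b = t + 1 := by rw [hba, map_add, map_one, ht]
  rw [hψb, hba] at hB
  have hE1 : (a + 2) * t ^ 2 + (a + 1) * t + (2 * a + 1) = 0 := by
    linear_combination 2 * hB + ((-1)*a*t^2 + (-1)*a*t + (-1)*t + (-1)) * hchar
  have hQ : (t + 2) * c ^ 2 + (t + 1) * c + (2 * t + 1) = 0 := by
    have h2 : ψ ((a + 2) * t ^ 2 + (a + 1) * t + (2 * a + 1)) = 0 := by rw [hE1, map_zero]
    simp only [map_add, map_mul, map_pow, map_ofNat, map_one] at h2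
    rw [← ht, ← hc] at h2
    linear_combination h2
  have hQ3 : ((t + 2) * c ^ 2 + (t + 1) * c + (2 * t + 1)) ^ 3 = 0 := by rw [hQ]; ring
  have hE2 : (a ^ 2 + a + 2) * t ^ 3 + (2 * a ^ 2 + a + 1) = 0 := by
    linear_combination hQ3 - (a*t^3 + 6*a*t^2 + 12*a*t + 8*a + t^3*c^3 + 3*t^3*c^2 + 9*t^3*c + 13*t^3 + 6*t^2*c^3 + 15*t^2*c^2 + 39*t^2*c + 45*t^2 + 12*t*c^3 + 24*t*c^2 + 51*t*c + 45*t + 8*c^3 + 12*c^2 + 18*c + 13) * hc3 + ((-2)*a^2*t^2 + (-4)*a^2*t + (-2)*a^2 + (-1)*a*t^3*c^2 + (-3)*a*t^3*c + (-4)*a*t^3 + (-5)*a*t^2*c^2 + (-13)*a*t^2*c + (-15)*a*t^2 + (-8)*a*t*c^2 + (-17)*a*t*c + (-15)*a*t + (-4)*a*c^2 + (-6)*a*c + (-4)*a + (-6)*t^3*c^2 + (-4)*t^3*c + (-2)*t^3 + (-17)*t^2*c^2 + (-8)*t^2*c + (-4)*t^2 + (-13)*t*c^2 + (-5)*t*c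 + (-2)*t + (-3)*c^2 + (-1)*c) * hchar
  have hP : (a + 1) * ((a ^ 3 + a ^ 2 + 2) * (a ^ 3 + 2 * a + 2)) = 0 := by
    linear_combination ((-1)*a^6*t^2 + (-1)*a^6*t + a^5*t^2 + (-1)*a^4*t + (-1)*a^3*t + (-1)*a^3 + (-1)*a*t^2 + (-1)*a + (-1)*t^2 + (-1)) * hE1 + (a^5*t + (-1)*a^5 + (-1)*a^3*t + (-1)*a^3 + a^2*t + a^2 + a*t + t + (-1)) * hE2 + (a^7*t^3 + a^7*t^2 + a^7 + a^6*t^3 + a^6 + (-1)*a^5*t^4 + a^5*t^3 + a^5*t + 2*a^5 + a^4*t^3 + a^4*t^2 + a^4*t + 3*a^4 + a^3*t^3 + a^3*t^2 + 3*a^3 + (-1)*a^2*t^4 + a^2*t^2 + (-1)*a^2*t + 3*a^2 + a*t^3 + 2*a*t^2 + 4*a + t^3 + t^2 + 2) * hchar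
  rcases mul_eq_zero.mp hP with h | h
  · exact hb0 (by rw [hba]; linear_combination h)
  rcases mul_eq_zero.mp h with hC | hC
  · -- a^3 + a^2 + 2 = 0
    have h27 : a ^ 27 = a := by
      linear_combination (a^24 + (-1)*a^23 + a^22 + (-1)*a^20 + (-1)*a^19 + a^18 + a^17 + a^16 + a^14 + a^11 + (-1)*a^10 + a^9 + (-1)*a^7 + (-1)*a^6 + a^5 + a^4 + a^3 + a) * hC + ((-1)*a^24 + a^23 + (-1)*a^18 + (-1)*a^17 + (-1)*a^16 + (-1)*a^14 + (-1)*a^11 + a^10 + (-1)*a^5 + (-1)*a^4 + (-1)*a^3 + (-1)*a) * hchar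
    have h27' : a ^ 3 ^ 3 = a := by norm_num; exact h27
    have hg := aux_pow_gcd a 3 3 m h27' (hfix a)
    rcases (Nat.prime_three.eq_one_or_self_of_dvd _ (Nat.gcd_dvd_left 3 m)) with hg1 | hg3
    · rw [hg1, pow_one] at hg
      exact one_ne_zero (by linear_combination (a^2 + a + (-1)) * hC + ((-1)*a^2 + a + (-1)) * hg + ((-1)*a^4 + (-1)*a + 1) * hchar : (1 : GaloisField 3 m) = 0)
    · have h3m : 3 ∣ m := hg3 ▸ Nat.gcd_dvd_right 3 m
      obtain ⟨k, hk⟩ : ∃ k, ℓ = 3 * k + 1 := ⟨ℓ / 3, by omega⟩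
      have hmf : a ^ 3 ^ (3 * k) = a := aux_pow_mul a 3 3 k h27'
      have ht3 : t = a ^ 3 := by
        rw [ht, hψ, hk]
        calc a ^ 3 ^ (3 * k + 1) = (a ^ 3 ^ (3 * k)) ^ 3 := by rw [← pow_mul, ← pow_succ]
          _ = a ^ 3 := by rw [hmf]
      rw [ht3] at hE1
      exact one_ne_zero (by linear_combination (a^6 + (-1)*a^5 + (-1)*a^3 + (-1)*a^2 + (-1)*a + (-1)) * hC + ((-1)*a^2 + (-1)*a) * hE1 + (a^8 + a^7 + 2*a^5 + a^4 + 2*a^3 + 2*a^2 + a + 1) * hchar : (1 : GaloisField 3 m) = 0)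
  · -- a^3 + 2a + 2 = 0
    have h27 : a ^ 27 = a := by
      linear_combination (a^24 + a^22 + a^21 + a^20 + (-1)*a^19 + (-1)*a^18 + a^16 + (-1)*a^15 + a^14 + a^11 + a^9 + a^8 + a^7 + (-1)*a^6 + (-1)*a^5 + a^3 + (-1)*a^2 + a) * hC + ((-1)*a^25 + (-1)*a^24 + (-1)*a^23 + (-1)*a^22 + (-1)*a^21 + a^19 + a^18 + (-1)*a^17 + (-1)*a^14 + (-1)*a^12 + (-1)*a^11 + (-1)*a^10 + (-1)*a^9 + (-1)*a^8 + a^6 + a^5 + (-1)*a^4 + (-1)*a) * hchar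
    have h27' : a ^ 3 ^ 3 = a := by norm_num; exact h27
    have hg := aux_pow_gcd a 3 3 m h27' (hfix a)
    rcases (Nat.prime_three.eq_one_or_self_of_dvd _ (Nat.gcd_dvd_left 3 m)) with hg1 | hg3
    · rw [hg1, pow_one] at hg
      exact one_ne_zero (by linear_combination ((-1)) * hC + (1) * hg + (a + 1) * hchar : (1 : GaloisField 3 m) = 0)
    · have h3m : 3 ∣ m := hg3 ▸ Nat.gcd_dvd_right 3 m
      obtain ⟨k, hk⟩ : ∃ k, ℓ = 3 * k + 1 := ⟨ℓ / 3, by omega⟩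
      have hmf : a ^ 3 ^ (3 * k) = a := aux_pow_mul a 3 3 k h27'
      have ht3 : t = a ^ 3 := by
        rw [ht, hψ, hk]
        calc a ^ 3 ^ (3 * k + 1) = (a ^ 3 ^ (3 * k)) ^ 3 := by rw [← pow_mul, ← pow_succ]
          _ = a ^ 3 := by rw [hmf]
      rw [ht3] at hE1
      exact one_ne_zero (by linear_combination ((-1)*a^6 + a^4 + (-1)*a^2 + a + 1) * hC + (a^2 + a + (-1)) * hE1 + ((-1)*a^8 + a^6 + (-1)*a^5 + (-1)*a^4 + (-1)*a^2 + (-1)*a) * hchar : (1 : GaloisField 3 m) = 0)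

private lemma caseMM (ℓ m : ℕ) (hℓ : 1 ≤ ℓ) (hm : m = 2 * ℓ + 1) (a b : GaloisField 3 m)
    (hba : b = 1 - a)
    (hB : (a ^ 3 ^ ℓ) ^ 2 * a + (b ^ 3 ^ ℓ) ^ 2 * b + 1 = 0) : False := by
  set ψ : GaloisField 3 m →+* GaloisField 3 m := iterateFrobenius (GaloisField 3 m) 3 ℓ
    with hψdef
  have hm0 : m ≠ 0 := by omega
  have hchar : (3 : GaloisField 3 m) = 0 := by
    have := CharP.cast_eq_zero (GaloisField 3 m) 3
    exact_mod_cast this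
  haveI : Fintype (GaloisField 3 m) := Fintype.ofFinite _
  have hcard : Fintype.card (GaloisField 3 m) = 3 ^ m := by
    rw [← Nat.card_eq_fintype_card, GaloisField.card 3 m hm0]
  have hfix : ∀ y : GaloisField 3 m, y ^ 3 ^ m = y := fun y => by
    rw [← hcard]; exact FiniteField.pow_card y
  have hψ : ∀ y : GaloisField 3 m, ψ y = y ^ 3 ^ ℓ := by
    intro y; rw [hψdef]; exact iterateFrobenius_def 3 ℓ y
  rw [← hψ a, ← hψ b] at hB
  set t := ψ a with ht
  set c := ψ t with hc
  have hc3 : c ^ 3 = a := by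
    rw [hc, ht, hψ, hψ, ← pow_mul, ← pow_mul,
      show 3 ^ ℓ * (3 ^ ℓ * 3) = 3 ^ m by rw [hm]; ring]
    exact hfix a
  have hψb : ψ b = 1 - t := by rw [hba, map_sub, map_one, ht]
  rw [hψb, hba] at hB
  have hE1 : t ^ 2 + (2 * a + 1) * t + (2 * a + 2) = 0 := by
    linear_combination hB + (a + t) * hchar
  have hQ : c ^ 2 + (2 * t + 1) * c + (2 * t + 2) = 0 := by
    have h2 : ψ (t ^ 2 + (2 * a + 1) * t + (2 * a + 2)) = 0 := by rw [hE1, map_zero]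
    simp only [map_add, map_mul, map_pow, map_ofNat, map_one] at h2
    rw [← ht, ← hc] at h2
    linear_combination h2
  have hQ3 : (c ^ 2 + (2 * t + 1) * c + (2 * t + 2)) ^ 3 = 0 := by rw [hQ]; ring
  have hE2 : a ^ 2 + (2 * t ^ 3 + 1) * a + (2 * t ^ 3 + 2) = 0 := by
    linear_combination hQ3 - (a + 8*t^3 + 12*t^2*c + 36*t^2 + 6*t*c^2 + 18*t*c + 42*t + c^3 + 3*c^2 + 9*c + 13) * hc3 + ((-2)*a*t^3 + (-4)*a*t^2*c + (-12)*a*t^2 + (-2)*a*t*c^2 + (-6)*a*t*c + (-14)*a*t + (-1)*a*c^2 + (-3)*a*c + (-4)*a + (-8)*t^3*c^2 + (-8)*t^3*c + (-2)*t^3 + (-20)*t^2*c^2 + (-20)*t^2*c + (-8)*t^2 + (-18)*t*c^2 + (-16)*t*c + (-8)*t + (-6)*c^2 + (-4)*c + (-2)) * hchar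
  have hP : (a ^ 3 + a ^ 2 + 2) * (a ^ 3 + 2 * a ^ 2 + 2 * a + 2) = 0 := by
    linear_combination ((-1)*a^4*t^2 + a^4*t + (-1)*a^4 + (-1)*a^3*t^3 + (-1)*a^3*t^2 + (-1)*a^3*t + (-1)*a^3 + (-1)*a^2*t^4 + (-1)*a^2*t^3 + (-1)*a^2*t^2 + a*t^4 + a*t^3 + a*t + (-1)*a + (-1)*t^4 + t^3 + t^2 + (-1)*t + (-1)) * hE1 + (a^4 + a^3 + (-1)*a^2 + (-1)*a*t^3 + a + (-1)*t^3) * hE2 + (a^5 + a^4*t^4 + 2*a^4*t^2 + a^4*t + 2*a^4 + a^3*t^5 + 2*a^3*t^4 + 3*a^3*t^3 + 2*a^3*t^2 + a^3*t + 2*a^3 + a^2*t^6 + a^2*t^3 + 3*a^2 + a*t^6 + (-1)*a*t^4 + (-2)*a*t^3 + a*t + 2*a + t^6 + t + 2) * hchar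
  rcases mul_eq_zero.mp hP with hC | hC
  · -- a^3 + a^2 + 2 = 0
    have h27 : a ^ 27 = a := by
      linear_combination (a^24 + (-1)*a^23 + a^22 + (-1)*a^20 + (-1)*a^19 + a^18 + a^17 + a^16 + a^14 + a^11 + (-1)*a^10 + a^9 + (-1)*a^7 + (-1)*a^6 + a^5 + a^4 + a^3 + a) * hC + ((-1)*a^24 + a^23 + (-1)*a^18 + (-1)*a^17 + (-1)*a^16 + (-1)*a^14 + (-1)*a^11 + a^10 + (-1)*a^5 + (-1)*a^4 + (-1)*a^3 + (-1)*a) * hchar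
    have h27' : a ^ 3 ^ 3 = a := by norm_num; exact h27
    have hg := aux_pow_gcd a 3 3 m h27' (hfix a)
    rcases (Nat.prime_three.eq_one_or_self_of_dvd _ (Nat.gcd_dvd_left 3 m)) with hg1 | hg3
    · rw [hg1, pow_one] at hg
      exact one_ne_zero (by linear_combination (a^2 + a + (-1)) * hC + ((-1)*a^2 + a + (-1)) * hg + ((-1)*a^4 + (-1)*a + 1) * hchar : (1 : GaloisField 3 m) = 0)
    · have h3m : 3 ∣ m := hg3 ▸ Nat.gcd_dvd_right 3 m
      obtain ⟨k, hk⟩ : ∃ k, ℓ = 3 * k + 1 := ⟨ℓ / 3, by omega⟩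
      have hmf : a ^ 3 ^ (3 * k) = a := aux_pow_mul a 3 3 k h27'
      have ht3 : t = a ^ 3 := by
        rw [ht, hψ, hk]
        calc a ^ 3 ^ (3 * k + 1) = (a ^ 3 ^ (3 * k)) ^ 3 := by rw [← pow_mul, ← pow_succ]
          _ = a ^ 3 := by rw [hmf]
      rw [ht3] at hE1
      exact one_ne_zero (by linear_combination ((-1)*a^5 + (-1)*a^4 + (-1)*a) * hC + (a^2 + (-1)*a + (-1)) * hE1 + (a^7 + a^5 + 2*a^4 + 2*a + 1) * hchar : (1 : GaloisField 3 m) = 0)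
  · -- a^3 + 2a^2 + 2a + 2 = 0
    have h27 : a ^ 27 = a := by
      linear_combination (a^24 + a^23 + (-1)*a^22 + a^21 + a^20 + a^19 + (-1)*a^17 + (-1)*a^15 + a^14 + a^11 + a^10 + (-1)*a^9 + a^8 + a^7 + a^6 + (-1)*a^4 + (-1)*a^2 + a) * hC + ((-1)*a^26 + (-1)*a^25 + (-1)*a^24 + (-1)*a^23 + (-1)*a^22 + (-2)*a^21 + (-1)*a^20 + a^18 + a^17 + (-1)*a^14 + (-1)*a^13 + (-1)*a^12 + (-1)*a^11 + (-1)*a^10 + (-1)*a^9 + (-2)*a^8 + (-1)*a^7 + a^5 + a^4 + (-1)*a) * hchar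
    have h27' : a ^ 3 ^ 3 = a := by norm_num; exact h27
    have hg := aux_pow_gcd a 3 3 m h27' (hfix a)
    rcases (Nat.prime_three.eq_one_or_self_of_dvd _ (Nat.gcd_dvd_left 3 m)) with hg1 | hg3
    · rw [hg1, pow_one] at hg
      exact one_ne_zero (by linear_combination ((-1)*a^2 + (-1)) * hC + (a^2 + (-1)*a + 1) * hg + (a^4 + a^3 + a^2 + a + 1) * hchar : (1 : GaloisField 3 m) = 0)
    · have h3m : 3 ∣ m := hg3 ▸ Nat.gcd_dvd_right 3 m
      obtain ⟨k, hk⟩ : ∃ k, ℓ = 3 * k + 1 := ⟨ℓ / 3, by omega⟩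
      have hmf : a ^ 3 ^ (3 * k) = a := aux_pow_mul a 3 3 k h27'
      have ht3 : t = a ^ 3 := by
        rw [ht, hψ, hk]
        calc a ^ 3 ^ (3 * k + 1) = (a ^ 3 ^ (3 * k)) ^ 3 := by rw [← pow_mul, ← pow_succ]
          _ = a ^ 3 := by rw [hmf]
      rw [ht3] at hE1
      exact one_ne_zero (by linear_combination ((-1)*a^5 + a^3 + a^2 + (-1)*a) * hC + (a^2 + (-1)*a + (-1)) * hE1 + (a^7 + (-1)*a^3 + 2*a + 1) * hchar : (1 : GaloisField 3 m) = 0)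

private lemma casePP (ℓ m : ℕ) (hℓ : 1 ≤ ℓ) (hm : m = 2 * ℓ + 1) (a b : GaloisField 3 m)
    (ha0 : a ≠ 0) (ha1 : a ≠ 1) (hb0 : b ≠ 0) (hba : b = -(a + 1))
    (hB : (a ^ 3 ^ ℓ) ^ 2 * a + (b ^ 3 ^ ℓ) ^ 2 * b + 1 = 0) : False := by
  set ψ : GaloisField 3 m →+* GaloisField 3 m := iterateFrobenius (GaloisField 3 m) 3 ℓ
    with hψdef
  have hm0 : m ≠ 0 := by omega
  have hchar : (3 : GaloisField 3 m) = 0 := by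
    have := CharP.cast_eq_zero (GaloisField 3 m) 3
    exact_mod_cast this
  haveI : Fintype (GaloisField 3 m) := Fintype.ofFinite _
  have hcard : Fintype.card (GaloisField 3 m) = 3 ^ m := by
    rw [← Nat.card_eq_fintype_card, GaloisField.card 3 m hm0]
  have hfix : ∀ y : GaloisField 3 m, y ^ 3 ^ m = y := fun y => by
    rw [← hcard]; exact FiniteField.pow_card y
  have hψ : ∀ y : GaloisField 3 m, ψ y = y ^ 3 ^ ℓ := by
    intro y; rw [hψdef]; exact iterateFrobenius_def 3 ℓ y
  rw [← hψ a, ← hψ b] at hB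
  set t := ψ a with ht
  have hψb : ψ b = -(t + 1) := by rw [hba, map_neg, map_add, map_one, ht]
  rw [hψb, hba] at hB
  have hfac : (1 - t) * (a - t) = 0 := by
    linear_combination (-1 : GaloisField 3 m) * hB + ((-1)*a*t + (-1)*t) * hchar
  rcases mul_eq_zero.mp hfac with h | h
  · have h1 : ψ a = ψ 1 := by rw [map_one, ← ht]; linear_combination -h
    exact ha1 (ψ.injective h1)
  · have hfixa : a ^ 3 ^ ℓ = a := by rw [← hψ a, ← ht]; linear_combination -h
    have hgcd : Nat.gcd ℓ m = 1 := by
      rw [hm, show 2 * ℓ + 1 = 1 + 2 * ℓ by omega, Nat.gcd_add_mul_right_right ℓ 1 2,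
        Nat.gcd_one_right]
    have hg : a ^ 3 ^ 1 = a := by
      rw [← hgcd]; exact aux_pow_gcd a 3 ℓ m hfixa (hfix a)
    rw [pow_one] at hg
    have hfac2 : a * (a - 1) * (a + 1) = 0 := by linear_combination hg
    rcases mul_eq_zero.mp hfac2 with h2 | h2
    · rcases mul_eq_zero.mp h2 with h3 | h3
      · exact ha0 h3
      · exact ha1 (by linear_combination h3)
    · exact hb0 (by rw [hba]; linear_combination -h2)

/-- Let ℓ ≥ 1, m = 2ℓ + 1, u = (3^m + 1)/2, v = 2·3^ℓ + 1. There are no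
y₁, y₂ ∈ GF(3^m) \ {0, 1} with y₁ ≠ y₂ such that y₁^u + y₂^u + 1 = 0 and
y₁^v + y₂^v + 1 = 0. -/
theorem stmt_12 (ℓ : ℕ) (hℓ : 1 ≤ ℓ) (m u v : ℕ)
    (hm : m = 2 * ℓ + 1) (hu : u = (3 ^ m + 1) / 2) (hv : v = 2 * 3 ^ ℓ + 1) :
    ¬ ∃ y₁ y₂ : GaloisField 3 m, y₁ ≠ 0 ∧ y₂ ≠ 0 ∧ y₁ ≠ 1 ∧ y₂ ≠ 1 ∧ y₁ ≠ y₂ ∧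
      y₁ ^ u + y₂ ^ u + 1 = 0 ∧ y₁ ^ v + y₂ ^ v + 1 = 0 := by
  rintro ⟨a, b, ha0, hb0, ha1, hb1, hab, hAu, hAv⟩
  have hm0 : m ≠ 0 := by omega
  haveI : Fintype (GaloisField 3 m) := Fintype.ofFinite _
  have hcard : Fintype.card (GaloisField 3 m) = 3 ^ m := by
    rw [← Nat.card_eq_fintype_card, GaloisField.card 3 m hm0]
  have hfix : ∀ y : GaloisField 3 m, y ^ 3 ^ m = y := fun y => by
    rw [← hcard]; exact FiniteField.pow_card y
  have hu2 : 2 * u = 3 ^ m + 1 := by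
    have hodd : Odd (3 ^ m) := Odd.pow ⟨1, by norm_num⟩
    obtain ⟨r, hr⟩ := hodd
    omega
  have hdich : ∀ y : GaloisField 3 m, y ^ u = y ∨ y ^ u = -y := by
    intro y
    have h2 : (y ^ u) ^ 2 = y ^ 2 := by
      rw [← pow_mul, show u * 2 = 3 ^ m + 1 by omega, pow_succ, hfix y]; ring
    have h0 : (y ^ u - y) * (y ^ u + y) = 0 := by linear_combination h2
    rcases mul_eq_zero.mp h0 with h | h
    · left; linear_combination h
    · right; linear_combination h
  have hvpow : ∀ y : GaloisField 3 m, y ^ v = (y ^ 3 ^ ℓ) ^ 2 * y := by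
    intro y
    rw [hv, pow_succ, show 2 * 3 ^ ℓ = 3 ^ ℓ * 2 by ring, pow_mul]
  rw [hvpow a, hvpow b] at hAv
  rcases hdich a with hua | hua <;> rcases hdich b with hub | hub <;> rw [hua, hub] at hAu
  · exact casePP ℓ m hℓ hm a b ha0 ha1 hb0 (by linear_combination hAu) hAv
  · exact casePM ℓ m hℓ hm a b hb0 (by linear_combination -hAu) hAv
  · refine casePM ℓ m hℓ hm b a ha0 (by linear_combination -hAu) (by linear_combination hAv)
  · exact caseMM ℓ m hℓ hm a b (by linear_combination -hAu) hAv
end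

section
/- Let ℓ ≥ 1 be an integer, m = 2ℓ + 1, u = (3^m + 1)/2, v = 2·3^ℓ + 1, and let π be a generator of GF(3^m)*. Consider the GF(3)-linear code C of length 3^m - 1 consisting of all vectors c = (c₀, c₁, ..., c_{3^m-2}) ∈ GF(3)^{3^m-1} such that Σ_{i=0}^{3^m-2} c_i·π^{u·i} = 0 and Σ_{i=0}^{3^m-2} c_i·π^{v·i} = 0 in GF(3^m) (coefficients c_i viewed in GF(3^m) via the canonical embedding). Then C is a GF(3)-subspace of GF(3)^{3^m-1} of dimension 3^m - 1 - 2m. -/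
private lemma stmt15_two_mul_lt (m : ℕ) : 2 * m < 3 ^ m := by
  induction m with
  | zero => norm_num
  | succ k ih =>
    have h1 : 1 ≤ 3 ^ k := Nat.one_le_pow _ _ (by norm_num)
    have h2 : (3:ℕ) ^ (k+1) = 3 * 3 ^ k := by ring
    omega

/-- Let ℓ ≥ 1, m = 2ℓ + 1, u = (3^m + 1)/2, v = 2·3^ℓ + 1, and π a generator of
GF(3^m)*. The set of vectors c ∈ GF(3)^{3^m-1} with Σ c_i·π^{u·i} = 0 and
Σ c_i·π^{v·i} = 0 is a GF(3)-subspace of dimension 3^m - 1 - 2m. -/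
theorem stmt_15 (ℓ : ℕ) (hℓ : 1 ≤ ℓ) (m u v : ℕ)
    (hm : m = 2 * ℓ + 1) (hu : u = (3 ^ m + 1) / 2) (hv : v = 2 * 3 ^ ℓ + 1)
    (π : GaloisField 3 m) (hπ : orderOf π = 3 ^ m - 1) :
    ∃ C : Submodule (ZMod 3) (Fin (3 ^ m - 1) → ZMod 3),
      (∀ c : Fin (3 ^ m - 1) → ZMod 3, c ∈ C ↔
        (∑ i : Fin (3 ^ m - 1),
            algebraMap (ZMod 3) (GaloisField 3 m) (c i) * π ^ (u * (i : ℕ)) = 0 ∧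
         ∑ i : Fin (3 ^ m - 1),
            algebraMap (ZMod 3) (GaloisField 3 m) (c i) * π ^ (v * (i : ℕ)) = 0)) ∧
      Module.finrank (ZMod 3) C = 3 ^ m - 1 - 2 * m := by
  classical
  haveI : Fintype (GaloisField 3 m) := Fintype.ofFinite _
  haveI : Fintype (GaloisField 3 m)ˣ := Fintype.ofFinite _
  have hm0 : m ≠ 0 := by omega
  set n := 3 ^ m - 1 with hn
  -- basic arithmetic
  have h9 : (9:ℕ) ^ ℓ % 4 = 1 := by rw [Nat.pow_mod]; norm_num
  have h3m9 : (3:ℕ) ^ m = 3 * 9 ^ ℓ := by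
    rw [hm]; rw [pow_succ, pow_mul]; norm_num [mul_comm]
  have h3mge : 27 ≤ (3:ℕ) ^ m := by
    calc (27:ℕ) = 3 ^ 3 := by norm_num
    _ ≤ 3 ^ m := Nat.pow_le_pow_right (by norm_num) (by omega)
  obtain ⟨s, hn2s, hsodd, hus⟩ : ∃ s, n = 2 * s ∧ s % 2 = 1 ∧ u = s + 1 := by
    exact ⟨n / 2, by omega, by omega, by omega⟩
  have hn0 : n ≠ 0 := by omega
  -- key identity for v
  have hA1 : 1 ≤ (3:ℕ) ^ ℓ := Nat.one_le_pow _ _ (by norm_num)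
  have hAA : 1 ≤ (3:ℕ) ^ ℓ * 3 ^ ℓ := Nat.mul_le_mul hA1 hA1
  have hw : v * (2 * 3 ^ (ℓ+1) - 3) = 4 * n + 1 := by
    have h1 : (3:ℕ) ^ (ℓ+1) = 3 * 3 ^ ℓ := by ring
    have h2 : (3:ℕ) ^ m = 3 * (3 ^ ℓ * 3 ^ ℓ) := by rw [hm]; ring
    rw [hv, h1, hn, h2]
    zify [hAA, show (3:ℕ) ≤ 2 * (3 * 3 ^ ℓ) by omega,
      show (1:ℕ) ≤ 3 * (3 ^ ℓ * 3 ^ ℓ) by omega]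
    ring
  -- powers of π
  have hπn : π ^ n = 1 := by rw [← hπ]; exact pow_orderOf_eq_one π
  have hπ0 : π ≠ 0 := by
    intro h
    rw [h, zero_pow hn0] at hπn
    exact zero_ne_one hπn
  have hred : ∀ q r : ℕ, π ^ (n * q + r) = π ^ r := by
    intro q r
    rw [pow_add, pow_mul, hπn, one_pow, one_mul]
  have hneg1 : π ^ s = -1 := by
    have hsq : π ^ s * π ^ s = 1 := by rw [← pow_add]; rw [show s + s = n by omega]; exact hπn
    rcases mul_self_eq_one_iff.mp hsq with h | h
    · exfalso
      have hdvd : orderOf π ∣ s := orderOf_dvd_of_pow_eq_one h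
      rw [hπ] at hdvd
      have := Nat.le_of_dvd (by omega) hdvd
      omega
    · exact h
  have h3F : (3 : (GaloisField 3 m)) = 0 := by
    have := CharP.cast_eq_zero (GaloisField 3 m) 3
    exact_mod_cast this
  -- generator
  have hcardF : Nat.card (GaloisField 3 m) = 3 ^ m := GaloisField.card 3 m hm0
  have hcardU : Nat.card (GaloisField 3 m)ˣ = n := by rw [Nat.card_units, hcardF]
  have hgen : ∀ a : (GaloisField 3 m), a ≠ 0 → ∃ k : ℕ, π ^ k = a := by
    intro a ha
    set pu : (GaloisField 3 m)ˣ := Units.mk0 π hπ0 with hpu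
    have hou : orderOf pu = n := by rw [← orderOf_units]; exact hπ
    have htop : Subgroup.zpowers pu = ⊤ := by
      apply Subgroup.eq_top_of_card_eq
      rw [Nat.card_zpowers, hou, hcardU]
    have hmem : Units.mk0 a ha ∈ Subgroup.zpowers pu := htop ▸ Subgroup.mem_top _
    rw [← mem_powers_iff_mem_zpowers] at hmem
    obtain ⟨k, hk⟩ := hmem
    refine ⟨k, ?_⟩
    have := congrArg Units.val hk
    simpa [hpu] using this
  -- the linear map
  set φ₁ : (Fin n → ZMod 3) →ₗ[ZMod 3] (GaloisField 3 m) :=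
    Fintype.linearCombination (ZMod 3) (fun i : Fin n => π ^ (u * (i:ℕ))) with hφ₁
  set φ₂ : (Fin n → ZMod 3) →ₗ[ZMod 3] (GaloisField 3 m) :=
    Fintype.linearCombination (ZMod 3) (fun i : Fin n => π ^ (v * (i:ℕ))) with hφ₂
  set φ : (Fin n → ZMod 3) →ₗ[ZMod 3] (GaloisField 3 m) × (GaloisField 3 m) := φ₁.prod φ₂ with hφ
  have hφapp : ∀ c : Fin n → ZMod 3, φ c =
      (∑ i : Fin n, algebraMap (ZMod 3) (GaloisField 3 m) (c i) * π ^ (u * (i:ℕ)),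
       ∑ i : Fin n, algebraMap (ZMod 3) (GaloisField 3 m) (c i) * π ^ (v * (i:ℕ))) := by
    intro c
    simp [hφ, hφ₁, hφ₂, LinearMap.prod_apply, Fintype.linearCombination_apply,
      Algebra.smul_def]
  -- single vectors in range
  have hmemi : ∀ j : ℕ, ((π ^ (u*j), π ^ (v*j)) : (GaloisField 3 m) × (GaloisField 3 m)) ∈ LinearMap.range φ := by
    intro j
    have hjlt : j % n < n := Nat.mod_lt _ (by omega)
    refine ⟨Pi.single ⟨j % n, hjlt⟩ 1, ?_⟩
    rw [hφapp]
    have hs : ∀ w : ℕ, ∑ i : Fin n, algebraMap (ZMod 3) (GaloisField 3 m) ((Pi.single (⟨j % n, hjlt⟩ : Fin n) (1:ZMod 3) : Fin n → ZMod 3) i) * π ^ (w * (i:ℕ)) = π ^ (w * (j % n)) := by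
      intro w
      rw [Finset.sum_eq_single (⟨j % n, hjlt⟩ : Fin n)]
      · simp
      · intro b _ hb
        simp [Pi.single_apply, hb]
      · simp
    have hr : ∀ w : ℕ, π ^ (w * (j % n)) = π ^ (w * j) := by
      intro w
      conv_rhs => rw [show w * j = n * (w * (j / n)) + w * (j % n) by
        conv_lhs => rw [← Nat.div_add_mod j n]
        ring]
      rw [hred]
    rw [hs u, hs v, hr u, hr v]
  -- (-(π^{ui}) appears; get (π^{u*i}, 0) ∈ range
  have hAmem : ∀ i : ℕ, ((π ^ (u*i), 0) : (GaloisField 3 m) × (GaloisField 3 m)) ∈ LinearMap.range φ := by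
    intro i
    obtain ⟨c, hc⟩ : ∃ c, s = 2 * c + 1 := ⟨s / 2, by omega⟩
    have h1 := hmemi i
    have h2 := hmemi (i + s)
    have e1 : π ^ (u*(i+s)) = π ^ (u*i) := by
      rw [show u * (i + s) = n * (c + 1) + u * i by rw [hus, hn2s, hc]; ring, hred]
    have e2 : π ^ (v*(i+s)) = -(π ^ (v*i)) := by
      rw [show v * (i + s) = n * 3 ^ ℓ + (s + v * i) by rw [hv, hn2s]; ring, hred,
        pow_add, hneg1, neg_one_mul]
    rw [e1, e2] at h2
    have hsum := Submodule.add_mem _ h1 h2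
    have hneg := Submodule.neg_mem _ hsum
    have heq : (-(((π ^ (u*i), π ^ (v*i)) : (GaloisField 3 m) × (GaloisField 3 m)) + (π ^ (u*i), -(π ^ (v*i))))) = ((π ^ (u*i), 0) : (GaloisField 3 m) × (GaloisField 3 m)) := by
      rw [Prod.mk_add_mk, Prod.neg_mk]
      refine Prod.ext ?_ ?_
      · show -(π ^ (u*i) + π ^ (u*i)) = π ^ (u*i)
        linear_combination (-(π ^ (u*i))) * h3F
      · show -(π ^ (v*i) + -(π ^ (v*i))) = (0:(GaloisField 3 m))
        ring
    rwa [heq] at hneg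
  have hBmem : ∀ i : ℕ, ((0, π ^ (v*i)) : (GaloisField 3 m) × (GaloisField 3 m)) ∈ LinearMap.range φ := by
    intro i
    have := Submodule.sub_mem _ (hmemi i) (hAmem i)
    simpa using this
  -- all (a, 0)
  have hD : ∀ a : (GaloisField 3 m), ((a, 0) : (GaloisField 3 m) × (GaloisField 3 m)) ∈ LinearMap.range φ := by
    intro a
    rcases eq_or_ne a 0 with rfl | ha
    · exact Submodule.zero_mem _
    obtain ⟨k, hk⟩ := hgen a ha
    have heven : ∀ t : ℕ, ((π ^ (2*t), 0) : (GaloisField 3 m) × (GaloisField 3 m)) ∈ LinearMap.range φ := by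
      intro t
      have := hAmem (2*t)
      rwa [show u * (2*t) = n * t + 2 * t by rw [hus, hn2s]; ring, hred] at this
    rcases Nat.even_or_odd k with ⟨t, rfl⟩ | ⟨t, rfl⟩
    · have := heven t
      rwa [show 2 * t = t + t by ring, hk] at this
    · -- k = 2t+1 ; π^(2t+1+s) = -a with 2t+1+s even
      obtain ⟨c, hc⟩ : ∃ c, s = 2 * c + 1 := ⟨s / 2, by omega⟩
      have := heven (t + c + 1)
      have he : π ^ (2 * (t + c + 1)) = -a := by
        rw [show 2 * (t + c + 1) = (2*t+1) + s by rw [hc]; ring, pow_add, hneg1, hk, mul_neg_one]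
      rw [he] at this
      have := Submodule.neg_mem _ this
      simpa using this
  have hE : ∀ b : (GaloisField 3 m), ((0, b) : (GaloisField 3 m) × (GaloisField 3 m)) ∈ LinearMap.range φ := by
    intro b
    rcases eq_or_ne b 0 with rfl | hb
    · exact Submodule.zero_mem _
    obtain ⟨k, hk⟩ := hgen b hb
    have := hBmem ((2 * 3 ^ (ℓ+1) - 3) * k)
    rwa [show v * ((2 * 3 ^ (ℓ+1) - 3) * k) = n * (4 * k) + k by
        rw [← mul_assoc, hw]; ring, hred, hk] at this
  have htop : LinearMap.range φ = ⊤ := by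
    rw [Submodule.eq_top_iff']
    rintro ⟨a, b⟩
    have : ((a, b) : (GaloisField 3 m) × (GaloisField 3 m)) = (a, 0) + (0, b) := by simp
    rw [this]
    exact Submodule.add_mem _ (hD a) (hE b)
  -- dimensions
  have hfrF : Module.finrank (ZMod 3) (GaloisField 3 m) = m := by
    have h := Module.card_eq_pow_finrank (K := ZMod 3) (V := (GaloisField 3 m))
    rw [← Nat.card_eq_fintype_card, hcardF, ZMod.card] at h
    exact Nat.pow_right_injective (by norm_num) h.symm
  have hrank := LinearMap.finrank_range_add_finrank_ker φ
  rw [htop, finrank_top, Module.finrank_prod, hfrF, Module.finrank_pi, Fintype.card_fin] at hrank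
  refine ⟨LinearMap.ker φ, ?_, ?_⟩
  · intro c
    rw [LinearMap.mem_ker, hφapp, Prod.mk_eq_zero]
  · have h2m := stmt15_two_mul_lt m
    omega
end

section
/- Let ℓ ≥ 1 be an integer, m = 2ℓ + 1, u = (3^m + 1)/2, v = 2·3^ℓ + 1, and let π be a generator of GF(3^m)*. Consider the GF(3)-linear code C of length 3^m - 1 consisting of all vectors c = (c₀, c₁, ..., c_{3^m-2}) ∈ GF(3)^{3^m-1} such that Σ_{i=0}^{3^m-2} c_i·π^{u·i} = 0 and Σ_{i=0}^{3^m-2} c_i·π^{v·i} = 0 in GF(3^m). Then the minimum Hamming weight of a nonzero codeword of C equals 4; that is, every nonzero c ∈ C has at least 4 nonzero coordinates, and some c ∈ C has exactly 4 nonzero coordinates. -/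
section helpers
variable {F : Type*} [CommRing F]

private lemma pow_iter (t : F) (a : ℕ) (h : t^(3^a) = t) : ∀ k, t^(3^(a*k)) = t := by
  intro k
  induction k with
  | zero => simp
  | succ k ih =>
    have : a * (k+1) = a*k + a := by ring
    rw [this, pow_add, pow_mul, ih, h]

private lemma pow3_step (t : F) (n : ℕ) : t^(3^(n+1)) = (t^(3^n))^3 := by
  rw [pow_succ, pow_mul]

/-- if t^{3^ℓ} = t and t^{3^m} = t with m = 2ℓ+1 then t^3 = t -/
private lemma gcd_one (t : F) (ℓ m : ℕ) (hℓ : 1 ≤ ℓ) (hm : m = 2*ℓ+1)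
    (htm : t^(3^m) = t) (h : t^(3^ℓ) = t) : t^3 = t := by
  have h1 := pow_iter t ℓ h (4*ℓ)
  have h2 := pow_iter t m htm (2*ℓ-1)
  have harith : ℓ*(4*ℓ) = m*(2*ℓ-1) + 1 := by
    obtain ⟨n, rfl⟩ : ∃ n, ℓ = n+1 := ⟨ℓ-1, by omega⟩
    subst hm
    have e : 2*(n+1)-1 = 2*n+1 := by omega
    rw [e]; ring
  rw [harith, pow3_step, h2] at h1
  exact h1

/-- if t^27 = t, t^{3^m} = t, m odd not divisible by 3, then t^3 = t -/
private lemma deg_cases (t : F) (m ℓ : ℕ) (hm : m = 2*ℓ+1)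
    (htm : t^(3^m) = t) (h27 : t^(3^3) = t) (hnd : ¬ (3 ∣ m)) : t^3 = t := by
  have it3 := pow_iter t 3 h27
  rcases (by omega : m % 3 = 1 ∨ m % 3 = 2) with h | h
  · obtain ⟨k, hk⟩ : ∃ k, m = 3*k + 1 := ⟨m/3, by omega⟩
    rw [hk, pow3_step, it3] at htm
    exact htm
  · obtain ⟨k, hk⟩ : ∃ k, m = 3*k + 2 := ⟨m/3, by omega⟩
    have h9 : t^(3^2) = t := by
      have : (3:ℕ)*k + 2 = (3*k) + 2 := rfl
      rw [hk, pow_add, pow_mul, it3] at htm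
      exact htm
    have it2 := pow_iter t 2 h9
    have hmo : m + 1 = 2 * ((m+1)/2) := by omega
    have : t^(3^(m+1)) = t := by rw [hmo]; exact it2 _
    rw [pow3_step, htm] at this
    exact this

end helpers

private lemma claim (ℓ m : ℕ) (hℓ : 1 ≤ ℓ) (hm : m = 2*ℓ+1)
    (t f1 f2 : GaloisField 3 m) (hf1 : f1 = 1 ∨ f1 = -1) (hf2 : f2 = 1 ∨ f2 = -1)
    (heq : f1 * t^(2*3^ℓ+1) + f2 * (1+t)^(2*3^ℓ+1) = -1) : t^3 = t := by
  have hm0 : m ≠ 0 := by omega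
  haveI : Fintype (GaloisField 3 m) := Fintype.ofFinite _
  have hca3 : ∀ x : GaloisField 3 m, x^(3^m) = x := by
    intro x
    have hc : Fintype.card (GaloisField 3 m) = 3^m := by
      rw [← Nat.card_eq_fintype_card]; exact GaloisField.card 3 m hm0
    rw [← hc]; exact FiniteField.pow_card x
  have hchar : (3 : GaloisField 3 m) = 0 := CharP.cast_eq_zero (GaloisField 3 m) 3
  have hodd : Odd ((3:ℕ)^ℓ) := Odd.pow ⟨1, by norm_num⟩
  set T := t^(3^ℓ) with hTdef
  set U := T^(3^ℓ) with hUdef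
  have hexp : (3:ℕ)^ℓ * (3^ℓ * 3) = 3^m := by
    rw [hm, pow_succ, two_mul, pow_add]; ring
  have hU3 : U^3 = t := by
    rw [hUdef, hTdef, ← pow_mul, ← pow_mul, hexp]
    exact hca3 t
  have hfrob : ∀ x y : GaloisField 3 m, (x+y)^(3^(ℓ:ℕ)) = x^(3^ℓ) + y^(3^ℓ) := by
    intro x y
    have h := map_add (iterateFrobenius (GaloisField 3 m) 3 ℓ) x y
    simpa [iterateFrobenius_def] using h
  have hsign : ∀ g : GaloisField 3 m, g = 1 ∨ g = -1 → g^(3^(ℓ:ℕ)) = g := by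
    rintro g (rfl | rfl)
    · exact one_pow _
    · exact Odd.neg_one_pow hodd
  have hf1p : f1^(3^(ℓ:ℕ)) = f1 := hsign f1 hf1
  have hf2p : f2^(3^(ℓ:ℕ)) = f2 := hsign f2 hf2
  have hpowv : ∀ x : GaloisField 3 m, x^(2*3^ℓ+1) = (x^(3^ℓ))^2 * x := by
    intro x
    rw [pow_add, pow_one, mul_comm 2 (3^ℓ), pow_mul]
  have heqT : f1 * (T^2*t) + f2 * ((1+T)^2*(1+t)) = -1 := by
    rw [hpowv t, hpowv (1+t), hfrob 1 t, one_pow] at heq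
    exact heq
  have heqs : f1 * (U^2*T) + f2 * ((1+U)^2*(1+T)) = -1 := by
    have h : (f1 * (T^2*t) + f2 * ((1+T)^2*(1+t)))^(3^(ℓ:ℕ))
        = ((-1 : GaloisField 3 m))^(3^(ℓ:ℕ)) := by rw [heqT]
    rw [hfrob] at h
    simp only [mul_pow] at h
    rw [hf1p, hf2p, pow_right_comm T 2, pow_right_comm (1+T) 2,
      hfrob 1 T, hfrob 1 t, one_pow, Odd.neg_one_pow hodd] at h
    exact h
  rcases hf1 with rfl | rfl <;> rcases hf2 with rfl | rfl
  · -- case (1,1)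
    have hTD : T * (U^2 + U - 1) = (U^2 - U - 1) := by
      linear_combination (-1:GaloisField 3 m) * heqs + (T*U^2 + T*U + U + 1) * hchar
    have hP : (-U^7 + U^6 + U^4 + U^3 + U - 1) = (0:GaloisField 3 m) := by
      linear_combination (U^4 + 2*U^3 - U^2 - 2*U + 1) * heqT + (-2*t*T*U^2 - 2*t*T*U + 2*t*T - 4*t*U^2 + 4*t - T*U^2 - T*U + T - 3*U^2 - U + 3) * hTD + (5*U^4 - 2*U^3 - 9*U^2 + 2*U + 5) * hU3 + (-2*U^7 + U^6 + 3*U^5 - 2*U^4 - 2*U^3 + 3*U^2 + U - 2) * hchar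
    have hU27 : U^27 = U := by
      linear_combination (-U^20 - U^19 - U^18 + U^17 - U^16 - U^14 - U^13 + U^12 - U^11 + U^10 - U^9 + U^8 + U^7 + U^5 - U^4 + U^3 + U^2 + U) * hP + (U^24 + U^22 + U^19 - U^18 + 2*U^17 - U^16 + U^15 - U^13 + U^12 - 2*U^11 + U^10 - U^9 - U^6 - U^4) * hchar
    have ht27 : t^27 = t := by
      rw [← hU3, ← pow_mul, mul_comm 3 27, pow_mul, hU27]
    by_cases h3t : t^3 = t
    · exact h3t
    have h27' : t^(3^3) = t := by norm_num [ht27]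
    have h3m : (3:ℕ) ∣ m := by
      by_contra hnd
      exact absurd (deg_cases t m ℓ hm (hca3 t) h27' hnd) h3t
    obtain ⟨j, hj⟩ : ∃ j, ℓ = 3*j+1 := ⟨ℓ/3, by omega⟩
    have hT3 : T = t^3 := by
      rw [hTdef, hj, pow3_step, pow_iter t 3 h27' j]
    have hg : (-t^7 + t^6 - t^4 - t^3 + t - 1) = (0:GaloisField 3 m) := by
      linear_combination heqT - (2*t^4 + t^3 + 2*t*T + 2*t + T + 2) * hT3 + (-t^7 - t^4 - t^3 - 1) * hchar
    have hfin : t = -1 := by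
      linear_combination (t^25 - t^24 - t^22 + t^21 - t^20 + t^19 - t^18 - t^16 + t^15 + t^12 + t^11 + t^9 + t^8 + t^5 - t^4 - t^2 + t - 1) * hg + (t^5 + t^4 + t^3 - t) * ht27 + (-t^31 + t^28 - t^27 - t^20 + t^19 + t^15 + t^12 + t^8 - t^7 + t^5 - t^2 + t) * hchar
    rw [hfin]; norm_num
  · -- case (1,-1)
    have h0 : (T-1)*(T-t) = 0 := by
      linear_combination (-1:GaloisField 3 m)*heqT + (-(T*(t+1)))*hchar
    rcases mul_eq_zero.1 h0 with h | h
    · have hT1 : T = 1 := by linear_combination h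
      have ht1 : t = 1 := by rw [← hU3, hUdef, hT1, one_pow, one_pow]
      rw [ht1]; norm_num
    · have hTt : t^(3^ℓ) = t := by rw [← hTdef]; linear_combination h
      exact gcd_one t ℓ m hℓ hm (hca3 t) hTt
  · -- case (-1,1)
    have hTD : T * (-U + 1) = (-U^2 + U + 1) := by
      linear_combination (1:GaloisField 3 m) * heqs + (-T*U - U - 1) * hchar
    have hP : (-U^6 - U^4 + U - 1) = (0:GaloisField 3 m) := by
      linear_combination (U^2 - 2*U + 1) * heqT + (2*t*U - 2*t + T*U - T + U^2 + U - 3) * hTD + (2*U^3 - 3*U^2 - 2*U + 3) * hU3 + (-U^6 + U^5 - U^3 + U^2 + U - 2) * hchar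
    have hU27 : U^27 = U := by
      linear_combination (-U^21 + U^19 - U^17 - U^16 - U^15 - U^14 + U^8 - U^6 + U^4 + U^3 + U^2 + U) * hP + (-U^21 - U^20 + U^8 + U^7) * hchar
    have ht27 : t^27 = t := by
      rw [← hU3, ← pow_mul, mul_comm 3 27, pow_mul, hU27]
    by_cases h3t : t^3 = t
    · exact h3t
    have h27' : t^(3^3) = t := by norm_num [ht27]
    have h3m : (3:ℕ) ∣ m := by
      by_contra hnd
      exact absurd (deg_cases t m ℓ hm (hca3 t) h27' hnd) h3t
    obtain ⟨j, hj⟩ : ∃ j, ℓ = 3*j+1 := ⟨ℓ/3, by omega⟩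
    have hT3 : T = t^3 := by
      rw [hTdef, hj, pow3_step, pow_iter t 3 h27' j]
    have hg : (t^6 - t^4 - t^3 + t - 1) = (0:GaloisField 3 m) := by
      linear_combination heqT - (t^3 + 2*t + T + 2) * hT3 + (-t^4 - t^3 - 1) * hchar
    have hfin : (1:GaloisField 3 m) = 0 := by
      linear_combination (t^22 - t^21 + t^20 - t^16 + t^15 + t^12 + t^11 - t^10 + t^7 - t^2 + t - 1) * hg + (-t + 1) * ht27 + (t^22 - t^21 + t^15 - t^13 + t^11 - t^2 + t) * hchar
    exact absurd hfin one_ne_zero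
  · -- case (-1,-1)
    have hTD : T * (U^2 + U - 1) = (U^2 - U) := by
      linear_combination (1:GaloisField 3 m) * heqs + (T*U^2 + T*U + U) * hchar
    have hP : (U^7 - U^6 + U^3 + U) = (0:GaloisField 3 m) := by
      linear_combination (U^4 + 2*U^3 - U^2 - 2*U + 1) * heqT + (2*t*T*U^2 + 2*t*T*U - 2*t*T + 4*t*U^2 - 2*t + T*U^2 + T*U - T + 3*U^2 + U - 2) * hTD + (-5*U^4 + 2*U^3 + 3*U^2 - 1) * hU3 + (2*U^7 - U^6 - U^5 + U^4 - U^2 + U) * hchar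
    have hU27 : U^27 = U := by
      linear_combination (U^20 + U^19 + U^18 + U^17 - U^15 + U^13 - U^7 - U^6 - U^5 - U^4 + U^2 - 1) * hP + (-U^21 - U^20 + U^8 + U^7) * hchar
    have ht27 : t^27 = t := by
      rw [← hU3, ← pow_mul, mul_comm 3 27, pow_mul, hU27]
    by_cases h3t : t^3 = t
    · exact h3t
    have h27' : t^(3^3) = t := by norm_num [ht27]
    have h3m : (3:ℕ) ∣ m := by
      by_contra hnd
      exact absurd (deg_cases t m ℓ hm (hca3 t) h27' hnd) h3t
    obtain ⟨j, hj⟩ : ∃ j, ℓ = 3*j+1 := ⟨ℓ/3, by omega⟩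
    have hT3 : T = t^3 := by
      rw [hTdef, hj, pow3_step, pow_iter t 3 h27' j]
    have hg : (t^7 - t^6 + t^4 + t^3 - t) = (0:GaloisField 3 m) := by
      linear_combination heqT - (-2*t^4 - t^3 - 2*t*T - 2*t - T - 2) * hT3 + (t^7 + t^4 + t^3) * hchar
    have hfin : t = 0 := by
      linear_combination (t^25 - t^24 + t^20 - t^19 + t^18 - t^13 + t^10 - t^9 - t^8 - t^5 + t^4 - 1) * hg + (-t^5 - t^4 - t^3 - t^2) * ht27 + (t^31 + t^26 - t^25 + t^16 - t^14 + t^12 - t^6) * hchar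
    rw [hfin]; norm_num

section reduction

private lemma signMulAux {F : Type*} [CommRing F] : ∀ p q : F, (p = 1 ∨ p = -1) → (q = 1 ∨ q = -1) →
    (p*q = 1 ∨ p*q = -1) := by
  rintro p q (rfl|rfl) (rfl|rfl) <;> first | (left; ring1) | (right; ring1)

private lemma signNeZeroAux {F : Type*} [Field F] : ∀ p : F, (p = 1 ∨ p = -1) → p ≠ 0 := by
  rintro p (rfl|rfl)
  · exact one_ne_zero
  · exact neg_ne_zero.mpr one_ne_zero

private lemma basic_facts (ℓ m : ℕ) (hℓ : 1 ≤ ℓ) (hm : m = 2*ℓ+1) :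
    (∀ x : GaloisField 3 m, x^(3^m) = x) ∧ (3 : GaloisField 3 m) = 0
      ∧ 2*((3^m+1)/2) = 3^m+1 ∧ Even ((3^m+1)/2) ∧ Odd (2*3^ℓ+1) := by
  have hm0 : m ≠ 0 := by omega
  haveI : Fintype (GaloisField 3 m) := Fintype.ofFinite _
  have hca3 : ∀ x : GaloisField 3 m, x^(3^m) = x := by
    intro x
    have hc : Fintype.card (GaloisField 3 m) = 3^m := by
      rw [← Nat.card_eq_fintype_card]; exact GaloisField.card 3 m hm0
    rw [← hc]; exact FiniteField.pow_card x
  have h94 : (9:ℕ)^ℓ % 4 = 1 := by rw [Nat.pow_mod]; norm_num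
  have h9 : (9:ℕ)^ℓ = 3^ℓ * 3^ℓ := by
    rw [show (9:ℕ) = 3*3 from rfl, mul_pow]
  have h3m9 : (3:ℕ)^m = 9^ℓ * 3 := by
    rw [hm, pow_succ, two_mul, pow_add, h9]
  refine ⟨hca3, CharP.cast_eq_zero (GaloisField 3 m) 3, by omega, Nat.even_iff.mpr (by omega),
    ⟨3^ℓ, by ring⟩⟩

private lemma pow_u_sq (ℓ m : ℕ) (hℓ : 1 ≤ ℓ) (hm : m = 2*ℓ+1) (w : GaloisField 3 m) :
    (w^((3^m+1)/2))^2 = w^2 := by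
  obtain ⟨hca3, -, h2u, -, -⟩ := basic_facts ℓ m hℓ hm
  rw [← pow_mul, mul_comm ((3^m+1)/2) 2, h2u, pow_succ, hca3]
  ring

private lemma no_wt2 (ℓ m : ℕ) (hℓ : 1 ≤ ℓ) (hm : m = 2*ℓ+1)
    (X Y γ1 γ2 : GaloisField 3 m) (hX : X ≠ 0) (hY : Y ≠ 0) (hXY : X ≠ Y)
    (hγ1 : γ1 = 1 ∨ γ1 = -1) (hγ2 : γ2 = 1 ∨ γ2 = -1)
    (equ : γ1 * X^((3^m+1)/2) + γ2 * Y^((3^m+1)/2) = 0)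
    (eqv : γ1 * X^(2*3^ℓ+1) + γ2 * Y^(2*3^ℓ+1) = 0) : False := by
  obtain ⟨hca3, hchar, h2u, hue, hvo⟩ := basic_facts ℓ m hℓ hm
  have hg1 : γ1^2 = 1 := by rcases hγ1 with rfl|rfl <;> norm_num
  have hg2 : γ2^2 = 1 := by rcases hγ2 with rfl|rfl <;> norm_num
  have hsq : X^2 = Y^2 := by
    have h1 : (γ1*X^((3^m+1)/2))^2 = (γ2*Y^((3^m+1)/2))^2 := by
      rw [show γ1*X^((3^m+1)/2) = -(γ2*Y^((3^m+1)/2)) from by linear_combination equ]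
      ring
    linear_combination h1 - (X^((3^m+1)/2))^2*hg1 + (Y^((3^m+1)/2))^2*hg2
      - pow_u_sq ℓ m hℓ hm X + pow_u_sq ℓ m hℓ hm Y
  have hfact : (X-Y)*(X+Y) = 0 := by linear_combination hsq
  rcases mul_eq_zero.1 hfact with h|h
  · exact hXY (by linear_combination h)
  · have hXneg : X = -Y := by linear_combination h
    rw [hXneg] at equ eqv
    rw [Even.neg_pow hue] at equ
    rw [Odd.neg_pow hvo] at eqv
    have hsum : (γ1 + γ2) * Y^((3^m+1)/2) = 0 := by linear_combination equ
    have hdiff : (γ2 - γ1) * Y^(2*3^ℓ+1) = 0 := by linear_combination eqv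
    have hs : γ1 + γ2 = 0 :=
      (mul_eq_zero.1 hsum).resolve_right (pow_ne_zero _ hY)
    have hd : γ2 - γ1 = 0 :=
      (mul_eq_zero.1 hdiff).resolve_right (pow_ne_zero _ hY)
    exact one_ne_zero (α := GaloisField 3 m)
      (by linear_combination γ1^2*hchar - γ1*hs + γ1*hd - hg1)

private lemma no_wt3 (ℓ m : ℕ) (hℓ : 1 ≤ ℓ) (hm : m = 2*ℓ+1)
    (X Y Z γ1 γ2 γ3 : GaloisField 3 m) (hX : X ≠ 0) (hY : Y ≠ 0) (hZ : Z ≠ 0)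
    (hXZ : X ≠ Z)
    (hγ1 : γ1 = 1 ∨ γ1 = -1) (hγ2 : γ2 = 1 ∨ γ2 = -1) (hγ3 : γ3 = 1 ∨ γ3 = -1)
    (equ : γ1 * X^((3^m+1)/2) + γ2 * Y^((3^m+1)/2) + γ3 * Z^((3^m+1)/2) = 0)
    (eqv : γ1 * X^(2*3^ℓ+1) + γ2 * Y^(2*3^ℓ+1) + γ3 * Z^(2*3^ℓ+1) = 0) : False := by
  obtain ⟨hca3, hchar, h2u, hue, hvo⟩ := basic_facts ℓ m hℓ hm
  set u := (3^m+1)/2 with hudef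
  set v := 2*3^ℓ+1 with hvdef
  have hZu : Z^u ≠ 0 := pow_ne_zero _ hZ
  have hZv : Z^v ≠ 0 := pow_ne_zero _ hZ
  set a := X * Z⁻¹ with hadef
  set b := Y * Z⁻¹ with hbdef
  have ha0 : a ≠ 0 := mul_ne_zero hX (inv_ne_zero hZ)
  have hb0 : b ≠ 0 := mul_ne_zero hY (inv_ne_zero hZ)
  have ha1 : a ≠ 1 := fun h => hXZ ((mul_inv_eq_one₀ hZ).mp h)
  have e1u : Z^u * a^u = X^u := by rw [hadef, mul_pow, inv_pow]; field_simp
  have e2u : Z^u * b^u = Y^u := by rw [hbdef, mul_pow, inv_pow]; field_simp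
  have e1v : Z^v * a^v = X^v := by rw [hadef, mul_pow, inv_pow]; field_simp
  have e2v : Z^v * b^v = Y^v := by rw [hbdef, mul_pow, inv_pow]; field_simp
  have equa : γ1*a^u + γ2*b^u + γ3 = 0 := by
    apply mul_left_cancel₀ hZu
    rw [mul_zero]
    linear_combination equ + γ1*e1u + γ2*e2u
  have eqva : γ1*a^v + γ2*b^v + γ3 = 0 := by
    apply mul_left_cancel₀ hZv
    rw [mul_zero]
    linear_combination eqv + γ1*e1v + γ2*e2v
  have hg3 : γ3^2 = 1 := by rcases hγ3 with rfl|rfl <;> norm_num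
  set d1 := γ3*γ1 with hd1def
  set d2 := γ3*γ2 with hd2def
  have hd1 : d1 = 1 ∨ d1 = -1 := signMulAux γ3 γ1 hγ3 hγ1
  have hd2 : d2 = 1 ∨ d2 = -1 := signMulAux γ3 γ2 hγ3 hγ2
  have hd1sq : d1^2 = 1 := by rcases hd1 with h|h <;> rw [h] <;> norm_num
  have hd2sq : d2^2 = 1 := by rcases hd2 with h|h <;> rw [h] <;> norm_num
  have equd : d1*a^u + d2*b^u = -1 := by linear_combination γ3*equa - hg3
  have eqvd : d1*a^v + d2*b^v = -1 := by linear_combination γ3*eqva - hg3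
  by_cases haneg : a = -1
  · rw [haneg] at equd eqvd
    rw [Even.neg_one_pow hue] at equd
    rw [Odd.neg_one_pow hvo] at eqvd
    rcases hd1 with h|h
    · rw [h] at eqvd
      have : d2*b^v = 0 := by linear_combination eqvd
      exact (mul_ne_zero (signNeZeroAux d2 hd2) (pow_ne_zero _ hb0)) this
    · rw [h] at equd
      have : d2*b^u = 0 := by linear_combination equd
      exact (mul_ne_zero (signNeZeroAux d2 hd2) (pow_ne_zero _ hb0)) this
  · set x := d1*a^u with hxdef
    set y := d2*b^u with hydef
    obtain ⟨s, hssign, hax⟩ : ∃ s : GaloisField 3 m, (s = 1 ∨ s = -1) ∧ a = s*x := by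
      have hfact : (a^u - a)*(a^u + a) = 0 := by linear_combination pow_u_sq ℓ m hℓ hm a
      rcases mul_eq_zero.1 hfact with h|h
      · exact ⟨d1, hd1, by rw [hxdef]; linear_combination -h - a^u*hd1sq⟩
      · exact ⟨-d1, by rcases hd1 with h'|h' <;> rw [h'] <;> [right; left] <;> norm_num,
          by rw [hxdef]; linear_combination h + a^u*hd1sq⟩
    obtain ⟨r, hrsign, hby⟩ : ∃ r : GaloisField 3 m, (r = 1 ∨ r = -1) ∧ b = r*y := by
      have hfact : (b^u - b)*(b^u + b) = 0 := by linear_combination pow_u_sq ℓ m hℓ hm b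
      rcases mul_eq_zero.1 hfact with h|h
      · exact ⟨d2, hd2, by rw [hydef]; linear_combination -h - b^u*hd2sq⟩
      · exact ⟨-d2, by rcases hd2 with h'|h' <;> rw [h'] <;> [right; left] <;> norm_num,
          by rw [hydef]; linear_combination h + b^u*hd2sq⟩
    have hsv : s^v = s := by
      rcases hssign with rfl|rfl
      · exact one_pow v
      · exact Odd.neg_one_pow hvo
    have hrv : r^v = r := by
      rcases hrsign with rfl|rfl
      · exact one_pow v
      · exact Odd.neg_one_pow hvo
    have hav : a^v = s * x^v := by rw [hax, mul_pow, hsv]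
    have hy : y = -(1+x) := by linear_combination equd
    have hbv : b^v = -(r * (1+x)^v) := by rw [hby, hy, mul_pow, Odd.neg_pow hvo, hrv]; ring
    have heqc : (d1*s) * x^v + (-(d2*r)) * (1+x)^v = -1 := by
      rw [hav, hbv] at eqvd
      linear_combination eqvd
    have hf1 : d1*s = 1 ∨ d1*s = -1 := signMulAux d1 s hd1 hssign
    have hf2 : -(d2*r) = 1 ∨ -(d2*r) = -1 := by
      rcases signMulAux d2 r hd2 hrsign with h|h <;> rw [h] <;> [right; left] <;> norm_num
    have hx3 : x^3 = x := claim ℓ m hℓ hm x (d1*s) (-(d2*r)) hf1 hf2 heqc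
    have hfact : x*((x-1)*(x+1)) = 0 := by linear_combination hx3
    rcases mul_eq_zero.1 hfact with h|h
    · exact ha0 (by rw [hax, h, mul_zero])
    rcases mul_eq_zero.1 h with h'|h'
    · have hx1 : x = 1 := by linear_combination h'
      rcases hssign with hs1|hs1
      · exact ha1 (by rw [hax, hx1, hs1, mul_one])
      · exact haneg (by rw [hax, hx1, hs1]; ring)
    · have hx1 : x = -1 := by linear_combination h'
      rcases hssign with hs1|hs1
      · exact haneg (by rw [hax, hx1, hs1]; ring)
      · exact ha1 (by rw [hax, hx1, hs1]; ring)

end reduction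

section packing
variable {n : ℕ}

private def evec2 (n : ℕ) (i j : Fin n) (a b : ZMod 3) : Fin n → ZMod 3 :=
  fun k => if k = i then a else if k = j then b else 0

private lemma evec2_i (i j : Fin n) (a b : ZMod 3) : evec2 n i j a b i = a := by
  simp [evec2]

private lemma evec2_j (i j : Fin n) (a b : ZMod 3) (hij : i ≠ j) : evec2 n i j a b j = b := by
  simp [evec2, hij.symm]

private lemma evec2_other (i j : Fin n) (a b : ZMod 3) (k : Fin n) (h1 : k ≠ i) (h2 : k ≠ j) :
    evec2 n i j a b k = 0 := by
  simp [evec2, h1, h2]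

private lemma evec2_inj (i j i' j' : Fin n) (hij : i < j) (hij' : i' < j')
    (a b a' b' : ZMod 3) (ha : a ≠ 0) (hb : b ≠ 0) (ha' : a' ≠ 0) (hb' : b' ≠ 0)
    (h : evec2 n i j a b = evec2 n i' j' a' b') : i = i' ∧ j = j' ∧ a = a' ∧ b = b' := by
  have hne : i ≠ j := ne_of_lt hij
  have hne' : i' ≠ j' := ne_of_lt hij'
  have hmem : ∀ k, evec2 n i j a b k ≠ 0 → k = i ∨ k = j := by
    intro k hk
    by_contra hc
    push_neg at hc
    rw [evec2_other i j a b k hc.1 hc.2] at hk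
    exact hk rfl
  have hmem' : ∀ k, evec2 n i' j' a' b' k ≠ 0 → k = i' ∨ k = j' := by
    intro k hk
    by_contra hc
    push_neg at hc
    rw [← h] at hk
    rw [h, evec2_other i' j' a' b' k hc.1 hc.2] at hk
    exact hk rfl
  have hi' : i' = i ∨ i' = j := by
    apply hmem
    rw [h, evec2_i]
    exact ha'
  have hj' : j' = i ∨ j' = j := by
    apply hmem
    rw [h, evec2_j i' j' a' b' hne']
    exact hb'
  have hi : i = i' ∨ i = j' := by
    apply hmem'
    rw [← h, evec2_i]
    exact ha
  rcases hi' with h1|h1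
  · have h2 : j' = j := by
      rcases hj' with h2|h2
      · exact absurd (h2.trans h1.symm) (ne_of_gt hij')
      · exact h2
    rw [h1, h2] at h
    have hva := congrFun h i
    rw [evec2_i, evec2_i] at hva
    have hvb := congrFun h j
    rw [evec2_j i j a b hne, evec2_j i j a' b' hne] at hvb
    exact ⟨h1.symm, h2.symm, hva, hvb⟩
  · exfalso
    rcases hi with h2|h2
    · exact hne (h2.trans h1)
    · have : j < i := by rw [← h1, h2]; exact hij'
      exact lt_asymm this hij
  
private def sortFun (n : ℕ) : {p : Fin n × Fin n // p.1 ≠ p.2} →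
    {p : Fin n × Fin n // p.1 < p.2} × Bool :=
  fun x => if h : x.1.1 < x.1.2 then (⟨x.1, h⟩, true)
    else (⟨(x.1.2, x.1.1), lt_of_le_of_ne (not_lt.mp h) (Ne.symm x.2)⟩, false)

private lemma sortFun_inj (n : ℕ) : Function.Injective (sortFun n) := by
  intro x y h
  by_cases hx : x.1.1 < x.1.2 <;> by_cases hy : y.1.1 < y.1.2 <;>
    simp [sortFun, hx, hy] at h
  · exact Subtype.ext h
  · exact Subtype.ext (Prod.ext h.2 h.1)

private def diagEquiv (n : ℕ) : {p : Fin n × Fin n // p.1 = p.2} ≃ Fin n where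
  toFun x := x.1.1
  invFun i := ⟨(i,i), rfl⟩
  left_inv x := by
    rcases x with ⟨⟨i,j⟩, h⟩
    cases h
    rfl
  right_inv i := rfl

private lemma card_ne_pairs (n : ℕ) :
    Nat.card {p : Fin n × Fin n // p.1 ≠ p.2} = n*n - n := by
  rw [Nat.card_eq_fintype_card]
  have h1 : Fintype.card {p : Fin n × Fin n // p.1 = p.2} = n := by
    rw [Fintype.card_congr (diagEquiv n), Fintype.card_fin]
  have := Fintype.card_subtype_compl (fun p : Fin n × Fin n => p.1 = p.2)
  rw [this, h1, Fintype.card_prod, Fintype.card_fin]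

end packing

set_option maxHeartbeats 4000000 in
/-- Let ℓ ≥ 1, m = 2ℓ + 1, u = (3^m + 1)/2, v = 2·3^ℓ + 1, and π a generator of
GF(3^m)*. In the code C of all c ∈ GF(3)^{3^m-1} with Σ c_i·π^{u·i} = 0 and
Σ c_i·π^{v·i} = 0, every nonzero codeword has at least 4 nonzero coordinates,
and some codeword has exactly 4 nonzero coordinates. -/
theorem stmt_16 (ℓ : ℕ) (hℓ : 1 ≤ ℓ) (m u v : ℕ)
    (hm : m = 2 * ℓ + 1) (hu : u = (3 ^ m + 1) / 2) (hv : v = 2 * 3 ^ ℓ + 1)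
    (π : GaloisField 3 m) (hπ : orderOf π = 3 ^ m - 1) :
    (∀ c : Fin (3 ^ m - 1) → ZMod 3,
      (∑ i : Fin (3 ^ m - 1),
          algebraMap (ZMod 3) (GaloisField 3 m) (c i) * π ^ (u * (i : ℕ)) = 0) →
      (∑ i : Fin (3 ^ m - 1),
          algebraMap (ZMod 3) (GaloisField 3 m) (c i) * π ^ (v * (i : ℕ)) = 0) →
      c ≠ 0 → 4 ≤ (Finset.univ.filter (fun i => c i ≠ 0)).card) ∧
    (∃ c : Fin (3 ^ m - 1) → ZMod 3,
      (∑ i : Fin (3 ^ m - 1),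
          algebraMap (ZMod 3) (GaloisField 3 m) (c i) * π ^ (u * (i : ℕ)) = 0) ∧
      (∑ i : Fin (3 ^ m - 1),
          algebraMap (ZMod 3) (GaloisField 3 m) (c i) * π ^ (v * (i : ℕ)) = 0) ∧
      (Finset.univ.filter (fun i => c i ≠ 0)).card = 4) := by
  subst hu
  subst hv
  have hm0 : m ≠ 0 := by omega
  have hm3 : 3 ≤ m := by omega
  have h27 : 27 ≤ 3^m := by
    calc (27:ℕ) = 3^3 := by norm_num
    _ ≤ 3^m := Nat.pow_le_pow_right (by norm_num) hm3
  have hN1 : 1 ≤ 3^m - 1 := by omega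
  -- π facts
  have hπpow : π^(3^m - 1) = 1 := by rw [← hπ]; exact pow_orderOf_eq_one π
  have hπ0 : π ≠ 0 := by
    intro h
    rw [h, zero_pow (by omega : 3^m - 1 ≠ 0)] at hπpow
    exact zero_ne_one hπpow
  have hπinj : ∀ i j : Fin (3^m - 1), π^(i:ℕ) = π^(j:ℕ) → i = j := by
    intro i j hij
    have hi : (i:ℕ) ∈ Set.Iio (orderOf π) := by rw [hπ]; exact i.isLt
    have hj : (j:ℕ) ∈ Set.Iio (orderOf π) := by rw [hπ]; exact j.isLt
    exact Fin.ext (pow_injOn_Iio_orderOf hi hj hij)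
  have hzmod : ∀ z : ZMod 3, z ≠ 0 → z = 1 ∨ z = -1 := by decide
  have hγ : ∀ z : ZMod 3, z ≠ 0 →
      (algebraMap (ZMod 3) (GaloisField 3 m) z = 1 ∨
       algebraMap (ZMod 3) (GaloisField 3 m) z = -1) := by
    intro z hz
    rcases hzmod z hz with rfl | rfl
    · left; exact map_one _
    · right; rw [map_neg, map_one]
  have hpw : ∀ (w:ℕ) (i : Fin (3^m-1)), π^(w*(i:ℕ)) = (π^(i:ℕ))^w := by
    intro w i
    rw [mul_comm, pow_mul]
  -- Part 1
  have part1 : (∀ c : Fin (3 ^ m - 1) → ZMod 3,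
      (∑ i : Fin (3 ^ m - 1),
          algebraMap (ZMod 3) (GaloisField 3 m) (c i) * π ^ ((3^m+1)/2 * (i : ℕ)) = 0) →
      (∑ i : Fin (3 ^ m - 1),
          algebraMap (ZMod 3) (GaloisField 3 m) (c i) * π ^ ((2*3^ℓ+1) * (i : ℕ)) = 0) →
      c ≠ 0 → 4 ≤ (Finset.univ.filter (fun i => c i ≠ 0)).card) := by
    intro c hsu hsv hc0
    by_contra hlt
    push_neg at hlt
    set S := Finset.univ.filter (fun i => c i ≠ 0) with hS
    have hmemS : ∀ i, i ∈ S ↔ c i ≠ 0 := by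
      intro i
      simp [hS]
    have hloc : ∀ w : ℕ,
        (∑ i : Fin (3^m-1), algebraMap (ZMod 3) (GaloisField 3 m) (c i) * π ^ (w * (i:ℕ)))
        = ∑ i ∈ S, algebraMap (ZMod 3) (GaloisField 3 m) (c i) * π ^ (w * (i:ℕ)) := by
      intro w
      symm
      apply Finset.sum_subset (Finset.subset_univ S)
      intro i _ hi
      have : c i = 0 := by
        by_contra hne
        exact hi ((hmemS i).mpr hne)
      rw [this, map_zero, zero_mul]
    rw [hloc] at hsu hsv
    have hSne : S.Nonempty := by
      rcases Finset.eq_empty_or_nonempty S with h | h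
      · exfalso
        apply hc0
        funext i
        by_contra hne
        have := (hmemS i).mpr hne
        rw [h] at this
        exact absurd this (Finset.notMem_empty i)
      · exact h
    have hcards : S.card = 1 ∨ S.card = 2 ∨ S.card = 3 := by
      have h1 := Finset.card_pos.mpr hSne
      omega
    rcases hcards with h1 | h2 | h3
    · obtain ⟨i, hSi⟩ := Finset.card_eq_one.mp h1
      have hci : c i ≠ 0 := (hmemS i).mp (by rw [hSi]; exact Finset.mem_singleton_self i)
      rw [hSi, Finset.sum_singleton] at hsu
      exact (mul_ne_zero (signNeZeroAux _ (hγ _ hci)) (pow_ne_zero _ hπ0)) hsu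
    · obtain ⟨i, j, hij, hSij⟩ := Finset.card_eq_two.mp h2
      have hci : c i ≠ 0 := (hmemS i).mp (by rw [hSij]; simp)
      have hcj : c j ≠ 0 := (hmemS j).mp (by rw [hSij]; simp)
      rw [hSij, Finset.sum_pair hij] at hsu hsv
      rw [hpw, hpw] at hsu hsv
      exact no_wt2 ℓ m hℓ hm (π^(i:ℕ)) (π^(j:ℕ)) _ _
        (pow_ne_zero _ hπ0) (pow_ne_zero _ hπ0)
        (fun h => hij (hπinj i j h)) (hγ _ hci) (hγ _ hcj) hsu hsv
    · obtain ⟨i, j, k, hij, hik, hjk, hSijk⟩ := Finset.card_eq_three.mp h3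
      have hci : c i ≠ 0 := (hmemS i).mp (by rw [hSijk]; simp)
      have hcj : c j ≠ 0 := (hmemS j).mp (by rw [hSijk]; simp)
      have hck : c k ≠ 0 := (hmemS k).mp (by rw [hSijk]; simp)
      rw [hSijk, Finset.sum_insert (by simp [hij, hik]), Finset.sum_pair hjk] at hsu hsv
      rw [hpw, hpw, hpw] at hsu hsv
      exact no_wt3 ℓ m hℓ hm (π^(i:ℕ)) (π^(j:ℕ)) (π^(k:ℕ)) _ _ _
        (pow_ne_zero _ hπ0) (pow_ne_zero _ hπ0) (pow_ne_zero _ hπ0)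
        (fun h => hik (hπinj i k h)) (hγ _ hci) (hγ _ hcj) (hγ _ hck)
        (by linear_combination hsu) (by linear_combination hsv)
  refine ⟨part1, ?_⟩
  -- Part 2 : existence via sphere packing
  by_contra hno
  -- the parity check map
  set φ : (Fin (3^m-1) → ZMod 3) →+ (GaloisField 3 m × GaloisField 3 m) :=
    { toFun := fun c => (∑ i : Fin (3^m-1),
          algebraMap (ZMod 3) (GaloisField 3 m) (c i) * π ^ ((3^m+1)/2 * (i : ℕ)),
        ∑ i : Fin (3^m-1),
          algebraMap (ZMod 3) (GaloisField 3 m) (c i) * π ^ ((2*3^ℓ+1) * (i : ℕ)))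
      map_zero' := by simp
      map_add' := by
        intro a b
        have hadd : ∀ w : ℕ,
            (∑ i : Fin (3^m-1), algebraMap (ZMod 3) (GaloisField 3 m) ((a+b) i) * π ^ (w * (i:ℕ)))
            = (∑ i : Fin (3^m-1), algebraMap (ZMod 3) (GaloisField 3 m) (a i) * π ^ (w * (i:ℕ)))
            + (∑ i : Fin (3^m-1), algebraMap (ZMod 3) (GaloisField 3 m) (b i) * π ^ (w * (i:ℕ))) := by
          intro w
          rw [← Finset.sum_add_distrib]
          exact Finset.sum_congr rfl (fun i _ => by rw [Pi.add_apply, map_add, add_mul])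
        exact Prod.ext (hadd _) (hadd _) } with hφdef
  set K := φ.ker with hK
  have hmemK : ∀ d : Fin (3^m-1) → ZMod 3, d ∈ K ↔
      ((∑ i : Fin (3^m-1),
          algebraMap (ZMod 3) (GaloisField 3 m) (d i) * π ^ ((3^m+1)/2 * (i : ℕ))) = 0 ∧
       (∑ i : Fin (3^m-1),
          algebraMap (ZMod 3) (GaloisField 3 m) (d i) * π ^ ((2*3^ℓ+1) * (i : ℕ))) = 0) := by
    intro d
    rw [hK, AddMonoidHom.mem_ker, hφdef]
    exact Prod.mk_eq_zero
  -- small-weight kernel elements vanish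
  have hsmall : ∀ d : Fin (3^m-1) → ZMod 3, d ∈ K →
      (Finset.univ.filter (fun i => d i ≠ 0)).card ≤ 4 → d = 0 := by
    intro d hdK hwt
    by_contra hd0
    have h4 := part1 d ((hmemK d).mp hdK).1 ((hmemK d).mp hdK).2 hd0
    exact hno ⟨d, ((hmemK d).mp hdK).1, ((hmemK d).mp hdK).2, le_antisymm hwt h4⟩
  -- cardinalities
  have hVcard : Nat.card (Fin (3^m-1) → ZMod 3) = 3^(3^m-1) := by
    rw [Nat.card_fun, Nat.card_zmod, Nat.card_eq_fintype_card, Fintype.card_fin]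
  have hquot := AddSubgroup.card_eq_card_quotient_mul_card_addSubgroup K
  have hQR : Nat.card ((Fin (3^m-1) → ZMod 3) ⧸ K) = Nat.card φ.range := by
    rw [hK]
    exact Nat.card_congr (QuotientAddGroup.quotientKerEquivRange φ).toEquiv
  have hRle : Nat.card φ.range ≤ Nat.card (GaloisField 3 m × GaloisField 3 m) :=
    Nat.card_le_card_of_injective _ (Subtype.val_injective)
  have hFF : Nat.card (GaloisField 3 m × GaloisField 3 m) = 3^m * 3^m := by
    rw [Nat.card_prod, GaloisField.card 3 m hm0]
  have hcountA : 3^(3^m-1) ≤ (3^m * 3^m) * Nat.card K := by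
    calc 3^(3^m-1) = Nat.card ((Fin (3^m-1) → ZMod 3) ⧸ K) * Nat.card K := by
          rw [← hVcard, hquot]
      _ ≤ (3^m * 3^m) * Nat.card K := by
          apply Nat.mul_le_mul_right
          rw [hQR, ← hFF]
          exact hRle
  -- the injection
  set Φ : K × ({p : Fin (3^m-1) × Fin (3^m-1) // p.1 < p.2} ×
      {z : ZMod 3 × ZMod 3 // z.1 ≠ 0 ∧ z.2 ≠ 0}) → (Fin (3^m-1) → ZMod 3) :=
    fun cp => (cp.1 : Fin (3^m-1) → ZMod 3) +
      evec2 (3^m-1) cp.2.1.1.1 cp.2.1.1.2 cp.2.2.1.1 cp.2.2.1.2 with hΦdef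
  have hΦinj : Function.Injective Φ := by
    rintro ⟨c, ⟨⟨⟨i,j⟩, hij⟩, ⟨⟨va,vb⟩, hva, hvb⟩⟩⟩ ⟨c', ⟨⟨⟨i',j'⟩, hij'⟩, ⟨⟨va',vb'⟩, hva', hvb'⟩⟩⟩ h
    simp only [hΦdef] at h
    have hd : (c : Fin (3^m-1) → ZMod 3) - (c' : Fin (3^m-1) → ZMod 3)
        = evec2 (3^m-1) i' j' va' vb' - evec2 (3^m-1) i j va vb := by
      linear_combination h
    have hdK : (c : Fin (3^m-1) → ZMod 3) - (c' : Fin (3^m-1) → ZMod 3) ∈ K :=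
      AddSubgroup.sub_mem K c.2 c'.2
    have hsupp : (Finset.univ.filter
        (fun k => ((c : Fin (3^m-1) → ZMod 3) - (c' : Fin (3^m-1) → ZMod 3)) k ≠ 0))
        ⊆ {i, j, i', j'} := by
      intro k hk
      rw [Finset.mem_filter] at hk
      by_contra hmem
      simp only [Finset.mem_insert, Finset.mem_singleton] at hmem
      push_neg at hmem
      apply hk.2
      have := congrFun hd k
      rw [Pi.sub_apply, Pi.sub_apply,
        evec2_other i' j' va' vb' k hmem.2.2.1 hmem.2.2.2,
        evec2_other i j va vb k hmem.1 hmem.2.1] at this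
      rw [Pi.sub_apply, this]
      simp
    have hwt : (Finset.univ.filter
        (fun k => ((c : Fin (3^m-1) → ZMod 3) - (c' : Fin (3^m-1) → ZMod 3)) k ≠ 0)).card ≤ 4 := by
      apply le_trans (Finset.card_le_card hsupp)
      apply le_trans (Finset.card_insert_le _ _)
      have h2 : ({j, i', j'} : Finset (Fin (3^m-1))).card ≤ 3 := by
        apply le_trans (Finset.card_insert_le _ _)
        have h3 : ({i', j'} : Finset (Fin (3^m-1))).card ≤ 2 := by
          apply le_trans (Finset.card_insert_le _ _)
          simp
        omega
      omega
    have hdz := hsmall _ hdK hwt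
    have hcc : c = c' := by
      apply Subtype.ext
      have := sub_eq_zero.mp hdz
      exact this
    have hee : evec2 (3^m-1) i j va vb = evec2 (3^m-1) i' j' va' vb' := by
      have h0 : evec2 (3^m-1) i' j' va' vb' - evec2 (3^m-1) i j va vb = 0 := by
        rw [← hd, hcc]
        simp
      linear_combination -h0
    obtain ⟨e1, e2, e3, e4⟩ := evec2_inj i j i' j' hij hij' va vb va' vb' hva hvb hva' hvb' hee
    subst e1; subst e2; subst e3; subst e4
    rw [hcc]
  have hcountB : Nat.card K *
      (Nat.card {p : Fin (3^m-1) × Fin (3^m-1) // p.1 < p.2} * 4) ≤ 3^(3^m-1) := by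
    have := Nat.card_le_card_of_injective Φ hΦinj
    rw [hVcard] at this
    calc Nat.card K * (Nat.card {p : Fin (3^m-1) × Fin (3^m-1) // p.1 < p.2} * 4)
        = Nat.card (K × ({p : Fin (3^m-1) × Fin (3^m-1) // p.1 < p.2} ×
          {z : ZMod 3 × ZMod 3 // z.1 ≠ 0 ∧ z.2 ≠ 0})) := by
          rw [Nat.card_prod, Nat.card_prod]
          congr 2
          rw [Nat.card_eq_fintype_card]
          decide
      _ ≤ 3^(3^m-1) := this
  have hsort : (3^m-1)*(3^m-1) - (3^m-1) ≤
      Nat.card {p : Fin (3^m-1) × Fin (3^m-1) // p.1 < p.2} * 2 := by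
    have h1 := Nat.card_le_card_of_injective _ (sortFun_inj (3^m-1))
    rw [card_ne_pairs] at h1
    calc (3^m-1)*(3^m-1) - (3^m-1)
        ≤ Nat.card ({p : Fin (3^m-1) × Fin (3^m-1) // p.1 < p.2} × Bool) := h1
      _ = Nat.card {p : Fin (3^m-1) × Fin (3^m-1) // p.1 < p.2} * 2 := by
          rw [Nat.card_prod, Nat.card_eq_fintype_card (α := Bool), Fintype.card_bool]
  have hKpos : 0 < Nat.card K := Nat.card_pos
  -- combine
  have hfinal : ((3^m-1)*(3^m-1) - (3^m-1)) * 2 ≤ 3^m * 3^m := by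
    have hc1 : Nat.card K * (((3^m-1)*(3^m-1) - (3^m-1)) * 2) ≤ Nat.card K * (3^m * 3^m) := by
      calc Nat.card K * (((3^m-1)*(3^m-1) - (3^m-1)) * 2)
          ≤ Nat.card K * (Nat.card {p : Fin (3^m-1) × Fin (3^m-1) // p.1 < p.2} * 2 * 2) := by
            apply Nat.mul_le_mul_left
            exact Nat.mul_le_mul_right 2 hsort
        _ = Nat.card K * (Nat.card {p : Fin (3^m-1) × Fin (3^m-1) // p.1 < p.2} * 4) := by ring
        _ ≤ 3^(3^m-1) := hcountB
        _ ≤ (3^m * 3^m) * Nat.card K := hcountA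
        _ = Nat.card K * (3^m * 3^m) := by ring
    exact Nat.le_of_mul_le_mul_left hc1 hKpos
  -- contradiction
  obtain ⟨P, hP⟩ : ∃ P, 3^m - 1 = P + 1 := ⟨3^m - 2, by omega⟩
  rw [hP] at hfinal
  have hP25 : 25 ≤ P := by omega
  have hsub : (P+1)*(P+1) - (P+1) = (P+1)*P := by
    have : (P+1)*(P+1) = (P+1)*P + (P+1) := by ring
    omega
  rw [hsub] at hfinal
  have hN1' : 3^m = P + 2 := by omega
  rw [hN1'] at hfinal
  nlinarith [hfinal, hP25]
end
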